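/- arXiv:1801.05684 — 4 statements merged into one kernel-verified Lean document; each statement's English description precedes it below -/
import Mathlib

section
/- Let d ≥ 2, n, k ∈ ℕ, and let w : E_d → (0,∞) be positive edge weights such that {π_z : z ∈ B_n} are pairwise distinct. Let φ be a nonnegative ℓ²-normalized eigenvector of the Dirichlet matrix −1_S L^w 1_S on S = 𝓑_k^{(n)} corresponding to its smallest eigenvalue. Let y, z ∈ S satisfy π_z < π_y and y not adjacent to z. Then φ(y) ≤ m_y / (1 − π_z/π_y), where m_y = 2·max_{x : x∼y} φ(x) (φ being extended by 0 outside S). -/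
open MeasureTheory ProbabilityTheory Filter

noncomputable section

abbrev V (d : ℕ) := Fin d → ℤ

/-- Nearest-neighbor adjacency on `ℤ^d`: `|x - y|₁ = 1`. -/
def adj {d : ℕ} (x y : V d) : Prop := (∑ i, |x i - y i|) = 1

instance {d : ℕ} (x y : V d) : Decidable (adj x y) := by unfold adj; infer_instance

/-- The finite set of nearest neighbors of a site. -/
def nbrs {d : ℕ} (z : V d) : Finset (V d) :=
  (Finset.Icc (z - 1) (z + 1)).filter (fun y => adj z y)

/-- The local speed measure `π_z = ∑_{y ∼ z} w z y`. -/
def speed {d : ℕ} (w : V d → V d → ℝ) (z : V d) : ℝ := ∑ y ∈ nbrs z, w z y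

/-- The box `B_n = [-n, n]^d ∩ ℤ^d`. -/
def box (d n : ℕ) : Finset (V d) := Finset.Icc (fun _ => -(n : ℤ)) (fun _ => (n : ℤ))

/-- The `k`-th smallest element (1-indexed, with multiplicity) of a multiset of reals. -/
def orderStat (s : Multiset ℝ) (k : ℕ) : ℝ := (s.sort (· ≤ ·)).getD (k - 1) 0

/-- `π_{k, B_n}`, the `k`-th order statistic of `{π_z : z ∈ B_n}`. -/
def piOrd {d : ℕ} (w : V d → V d → ℝ) (n k : ℕ) : ℝ :=
  orderStat ((box d n).val.map (speed w)) k

/-- The Dirichlet matrix `-1_S L^w 1_S` on a finite set `S`. -/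
def dMat {d : ℕ} (w : V d → V d → ℝ) (S : Finset (V d)) : Matrix S S ℝ :=
  fun x y => (if (x : V d) = (y : V d) then speed w (x : V d) else 0) -
    (if adj (x : V d) (y : V d) then w (x : V d) (y : V d) else 0)

/-- The `k`-th smallest eigenvalue (1-indexed, with multiplicity) of a symmetric real
matrix (junk value `0` if the matrix is not symmetric). -/
def eigs {m : Type*} [Fintype m] [DecidableEq m] (A : Matrix m m ℝ) (k : ℕ) : ℝ :=
  if hA : A.IsHermitian then orderStat (Finset.univ.val.map hA.eigenvalues) k else 0

/-- The set `𝓑_l^{(n)} = B_n \ {z_{(1,n)}, …, z_{(l-1,n)}}`: the box with the sites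
carrying the `l - 1` smallest values of `π` removed. -/
def BB {d : ℕ} (w : V d → V d → ℝ) (n l : ℕ) : Finset (V d) :=
  (box d n).filter (fun z => piOrd w n l ≤ speed w z)

/-- `g(u) = sup {s ≥ 0 : F s = u^{-1/2}}`. -/
def gfun (F : ℝ → ℝ) (u : ℝ) : ℝ := sSup {s : ℝ | 0 ≤ s ∧ F s = u ^ (-(1/2 : ℝ))}

/-- `G` varies regularly at zero with index `γ`. -/
def RegVarZero (G : ℝ → ℝ) (γ : ℝ) : Prop :=
  ∀ b > (0:ℝ), Tendsto (fun a => G (a * b) / G a) (nhdsWithin 0 (Set.Ioi 0)) (nhds (b ^ γ))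

/-- `G` varies regularly at infinity with index `ρ`. -/
def RegVarInfty (G : ℝ → ℝ) (ρ : ℝ) : Prop :=
  ∀ l > (0:ℝ), Tendsto (fun u => G (l * u) / G u) atTop (nhds (l ^ ρ))

/-- The conductances are i.i.d., positive, symmetric, with marginal distribution
function `F`. -/
def IIDConductances {d : ℕ} {Ω : Type*} [MeasurableSpace Ω] (P : Measure Ω)
    (w : Ω → V d → V d → ℝ) (F : ℝ → ℝ) : Prop :=
  (∀ ω x y, w ω x y = w ω y x) ∧
  (∀ ω x y, adj x y → 0 < w ω x y) ∧
  (∀ x y : V d, Measurable fun ω => w ω x y) ∧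
  iIndepFun
    (fun (p : V d × Fin d) ω => w ω p.1 (p.1 + Pi.single p.2 1)) P ∧
  (∀ (x : V d) (i : Fin d) (u : ℝ),
    (P {ω | w ω x (x + Pi.single i 1) ≤ u}).toReal = F u)

/-- Assumption A with the choice of `ε₁` left existential (as used for the
almost-sure convergence statement). -/
def AssumptionA0 (F : ℝ → ℝ) (γ : ℝ) : Prop :=
  Continuous F ∧ RegVarZero F γ ∧ 0 ≤ γ ∧ γ < 1/4 ∧
  (∃ astar > (0:ℝ), ∀ a, 0 < a → a ≤ astar → ∀ b, 0 ≤ b → b ≤ 1 → b * F a ≤ F (a * b)) ∧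
  (γ = 0 → ∃ ε₁ ∈ Set.Ioo (0:ℝ) 1,
    Antitone (fun n : ℕ => (n : ℝ) ^ ((2:ℝ) + ε₁) * gfun F n) ∧
    Tendsto (fun n : ℕ => (n : ℝ) ^ ((2:ℝ) + ε₁) * gfun F n) atTop (nhds 0))

/-- Assumption A together with a fixed admissible exponent `ε₁`:
if `γ = 0` then `n^{2+ε₁} g(n)` decreases monotonically to `0`;
if `γ > 0` then `1/(2γ) > 2 + ε₁`. -/
def AssumptionAe (F : ℝ → ℝ) (γ ε₁ : ℝ) : Prop :=
  Continuous F ∧ RegVarZero F γ ∧ 0 ≤ γ ∧ γ < 1/4 ∧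
  (∃ astar > (0:ℝ), ∀ a, 0 < a → a ≤ astar → ∀ b, 0 ≤ b → b ≤ 1 → b * F a ≤ F (a * b)) ∧
  0 < ε₁ ∧ ε₁ < 1 ∧
  (γ = 0 →
    Antitone (fun n : ℕ => (n : ℝ) ^ ((2:ℝ) + ε₁) * gfun F n) ∧
    Tendsto (fun n : ℕ => (n : ℝ) ^ ((2:ℝ) + ε₁) * gfun F n) atTop (nhds 0)) ∧
  (0 < γ → 2 + ε₁ < 1 / (2 * γ))

/-! The smallest eigenvalue `λ₁` of a symmetric matrix is at most each of its diagonal entries,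
since `A - λ₁` is positive semidefinite; for the Dirichlet matrix this gives `λ₁ ≤ π_z`.
The eigenvalue equation at `y` reads `(π_y - λ₁) φ(y) = ∑_{x ∼ y} w_{yx} φ(x) ≤ π_y m`, where
`m = max_{x ∼ y} φ(x)`, hence `φ(y) (1 - π_z / π_y) ≤ m`, even without the factor `2`. -/

open Matrix

section Lattice

variable {d : ℕ}

theorem adj_comm (x y : V d) : adj x y ↔ adj y x := by
  simp only [adj, abs_sub_comm (x _)]

theorem not_adj_self (z : V d) : ¬ adj z z := by
  simp [adj]

theorem mem_nbrs {z x : V d} : x ∈ nbrs z ↔ adj z x := by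
  refine ⟨fun h => (Finset.mem_filter.mp h).2, fun h => Finset.mem_filter.mpr ⟨?_, h⟩⟩
  have hle : ∀ i, |z i - x i| ≤ 1 := fun i =>
    (Finset.single_le_sum (fun j _ => abs_nonneg (z j - x j)) (Finset.mem_univ i)).trans_eq h
  rw [Finset.mem_Icc]
  constructor <;> intro i <;> have := abs_le.mp (hle i) <;>
    simp only [Pi.sub_apply, Pi.add_apply, Pi.one_apply] <;> omega

theorem coe_nbrs (z : V d) : (nbrs z : Set (V d)) = {x | adj z x} :=
  Set.ext fun _ => mem_nbrs

variable {w : V d → V d → ℝ}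

theorem le_sSup_image_adj (f : V d → ℝ) {y x : V d} (h : adj y x) :
    f x ≤ sSup (f '' {x | adj y x}) :=
  le_csSup ((coe_nbrs y ▸ (nbrs y).finite_toSet).image f).bddAbove ⟨x, h, rfl⟩

theorem speed_nonneg (hpos : ∀ x y, adj x y → 0 < w x y) (z : V d) : 0 ≤ speed w z :=
  Finset.sum_nonneg fun x hx => (hpos z x (mem_nbrs.mp hx)).le

theorem sum_nbrs_mul_le_speed_mul_sSup (hpos : ∀ x y, adj x y → 0 < w x y) (f : V d → ℝ)
    (y : V d) : ∑ x ∈ nbrs y, w y x * f x ≤ speed w y * sSup (f '' {x | adj y x}) := by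
  rw [speed, Finset.sum_mul]
  refine Finset.sum_le_sum fun x hx => ?_
  have hadj := mem_nbrs.mp hx
  exact mul_le_mul_of_nonneg_left (le_sSup_image_adj f hadj) (hpos y x hadj).le

end Lattice

section Dirichlet

variable {d : ℕ} {w : V d → V d → ℝ} {S : Finset (V d)}

def extendByZero (S : Finset (V d)) (φ : S → ℝ) (x : V d) : ℝ :=
  if hx : x ∈ S then φ ⟨x, hx⟩ else 0

theorem dMat_isHermitian (hsymm : ∀ x y, w x y = w y x) : (dMat w S).IsHermitian := by
  ext x y
  simp only [conjTranspose_apply, star_trivial, dMat, eq_comm (a := (y : V d)), adj_comm (y : V d)]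
  split_ifs with h <;> simp [h, hsymm]

theorem dMat_apply_self (x : S) : dMat w S x x = speed w x := by
  simp [dMat, not_adj_self]

theorem dMat_mulVec_apply (φ : S → ℝ) (y : S) :
    (dMat w S *ᵥ φ) y = speed w y * φ y - ∑ x ∈ nbrs y, w y x * extendByZero S φ x := by
  have hdiag : ∑ x : S, (if (y : V d) = x then speed w y else 0) * φ x = speed w y * φ y := by
    rw [Finset.sum_eq_single y (fun x _ hxy => by simp [Subtype.coe_ne_coe.mpr (Ne.symm hxy)])
      (by simp)]
    simp
  have hoff : ∑ x : S, (if adj (y : V d) x then w y x else 0) * φ x =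
      ∑ x ∈ nbrs y, w y x * extendByZero S φ x :=
    calc _ = ∑ x ∈ S, if adj (y : V d) x then w y x * extendByZero S φ x else 0 := by
          rw [← Finset.sum_coe_sort S]
          simp [extendByZero, ite_mul]
      _ = ∑ x ∈ S.filter (adj (y : V d)), w y x * extendByZero S φ x :=
          (Finset.sum_filter _ _).symm
      _ = _ := Finset.sum_subset (fun x hx => mem_nbrs.mpr (Finset.mem_filter.mp hx).2)
          fun x hx hxS => by simp_all [extendByZero, mem_nbrs]
  simp only [mulVec, dotProduct, dMat, sub_mul, Finset.sum_sub_distrib, hdiag, hoff]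

end Dirichlet

section Spectrum

variable {m : Type*} [Fintype m] [DecidableEq m]

theorem orderStat_one_le {s : Multiset ℝ} {a : ℝ} (ha : a ∈ s) : orderStat s 1 ≤ a := by
  unfold orderStat
  have hsorted := Multiset.pairwise_sort s (· ≤ ·)
  rw [← Multiset.mem_sort (· ≤ ·)] at ha
  cases h : s.sort (· ≤ ·) with
  | nil => simp [h] at ha
  | cons b t =>
    rw [h] at ha hsorted
    rcases List.mem_cons.mp ha with rfl | hat
    · rfl
    · exact (List.pairwise_cons.mp hsorted).1 a hat

theorem Matrix.IsHermitian.eigs_one_le_eigenvalues {A : Matrix m m ℝ} (hA : A.IsHermitian)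
    (i : m) : eigs A 1 ≤ hA.eigenvalues i := by
  rw [eigs, dif_pos hA]
  exact orderStat_one_le (Multiset.mem_map_of_mem _ (Finset.mem_univ i))

theorem Matrix.IsHermitian.posSemidef_sub_algebraMap {A : Matrix m m ℝ} (hA : A.IsHermitian)
    {c : ℝ} (hc : ∀ i, c ≤ hA.eigenvalues i) : (A - algebraMap ℝ _ c).PosSemidef := by
  rw [posSemidef_iff_isHermitian_and_spectrum_nonneg]
  refine ⟨hA.sub (isHermitian_diagonal _), ?_⟩
  rw [← spectrum.sub_singleton_eq, hA.spectrum_real_eq_range_eigenvalues]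
  rintro _ ⟨_, ⟨i, rfl⟩, _, rfl, rfl⟩
  exact sub_nonneg.mpr (hc i)

theorem Matrix.IsHermitian.eigs_one_le_apply_self {A : Matrix m m ℝ} (hA : A.IsHermitian)
    (i : m) : eigs A 1 ≤ A i i := by
  have := (hA.posSemidef_sub_algebraMap hA.eigs_one_le_eigenvalues).diag_nonneg (i := i)
  simpa [algebraMap_eq_diagonal] using this

end Spectrum

theorem le_two_mul_div_one_sub_div {p M s t : ℝ} (hp : 0 ≤ p) (ht : 0 ≤ t) (hts : t < s)
    (h : p * (s - t) ≤ s * M) : p ≤ 2 * M / (1 - t / s) := by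
  have hs : 0 < s := ht.trans_lt hts
  rw [one_sub_div hs.ne', div_div_eq_mul_div, le_div_iff₀ (sub_pos.mpr hts)]
  nlinarith [mul_nonneg hp (sub_pos.mpr hts).le]

theorem principal_eigenvector_mass_bound_general {d : ℕ} (n k : ℕ)
    (w : V d → V d → ℝ)
    (hsymm : ∀ x y, w x y = w y x) (hpos : ∀ x y, adj x y → 0 < w x y)
    (φ : ↥(BB w n k) → ℝ) (hnn : ∀ x, 0 ≤ φ x)
    (heig : (dMat w (BB w n k)).mulVec φ = eigs (dMat w (BB w n k)) 1 • φ)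
    (y z : V d) (hy : y ∈ BB w n k) (hz : z ∈ BB w n k)
    (hπ : speed w z < speed w y) :
    φ ⟨y, hy⟩ ≤
      (2 * sSup ((fun x : V d => if hx : x ∈ BB w n k then φ ⟨x, hx⟩ else 0) ''
          {x : V d | adj y x})) / (1 - speed w z / speed w y) := by
  change _ ≤ 2 * sSup (extendByZero (BB w n k) φ '' _) / _
  set μ := eigs (dMat w (BB w n k)) 1
  have hμ : μ ≤ speed w z := by
    simpa [dMat_apply_self] using
      (dMat_isHermitian (S := BB w n k) hsymm).eigs_one_le_apply_self ⟨z, hz⟩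
  have heig_y :
      speed w y * φ ⟨y, hy⟩ - ∑ x ∈ nbrs y, w y x * extendByZero (BB w n k) φ x =
        μ * φ ⟨y, hy⟩ := by
    simpa [dMat_mulVec_apply] using congrFun heig ⟨y, hy⟩
  have hsum := sum_nbrs_mul_le_speed_mul_sSup hpos (extendByZero (BB w n k) φ) y
  refine le_two_mul_div_one_sub_div (hnn _) (speed_nonneg hpos z) hπ ?_
  nlinarith [mul_le_mul_of_nonneg_left hμ (hnn ⟨y, hy⟩)]

/-- bound on the mass of a nonnegative principal Dirichlet eigenvector
of `𝓑_k^{(n)}` at a site `y` whose speed is not minimal. -/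
theorem principal_eigenvector_mass_bound {d : ℕ} (hd : 2 ≤ d) (n k : ℕ)
    (w : V d → V d → ℝ)
    (hsymm : ∀ x y, w x y = w y x) (hpos : ∀ x y, adj x y → 0 < w x y)
    (hdist : ∀ z₁ ∈ box d n, ∀ z₂ ∈ box d n, z₁ ≠ z₂ → speed w z₁ ≠ speed w z₂)
    (φ : ↥(BB w n k) → ℝ) (hnn : ∀ x, 0 ≤ φ x) (hnorm : (∑ x, φ x ^ 2) = 1)
    (heig : (dMat w (BB w n k)).mulVec φ = eigs (dMat w (BB w n k)) 1 • φ)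
    (y z : V d) (hy : y ∈ BB w n k) (hz : z ∈ BB w n k)
    (hπ : speed w z < speed w y) (hnadj : ¬ adj y z) :
    φ ⟨y, hy⟩ ≤
      (2 * sSup ((fun x : V d => if hx : x ∈ BB w n k then φ ⟨x, hx⟩ else 0) ''
          {x : V d | adj y x})) / (1 - speed w z / speed w y) :=
  principal_eigenvector_mass_bound_general n k w hsymm hpos φ hnn heig y z hy hz hπ
end
end

section
/- (Bauer–Fike.) Let H be a finite-dimensional real inner product space, A : H → H a self-adjoint linear map, μ ∈ ℝ, α > 0, and u ∈ H with ‖u‖ = 1 and ‖Au − μu‖ ≤ α. Then: (i) A has an eigenvalue μ_i with |μ_i − μ| ≤ α; (ii) for every β > α there exists ū ∈ H with ‖ū‖ = 1, ‖u − ū‖ ≤ 2α/β, and ū lies in the span of the eigenspaces of A corresponding to eigenvalues in the interval [μ − β, μ + β]. -/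
noncomputable section

open scoped RealInnerProductSpace in
/-- Bauer–Fike: if `A` is self-adjoint, `‖u‖ = 1` and
`‖Au - μu‖ ≤ α`, then `A` has an eigenvalue within `α` of `μ`, and for every
`β > α` there is a unit vector `ū` with `‖u - ū‖ ≤ 2α/β` lying in the span of the
eigenspaces for eigenvalues in `[μ - β, μ + β]`. -/
theorem bauer_fike {H : Type*} [NormedAddCommGroup H] [InnerProductSpace ℝ H]
    [FiniteDimensional ℝ H] (A : H →ₗ[ℝ] H)
    (hA : ∀ x y : H, ⟪A x, y⟫ = ⟪x, A y⟫)
    (μ α : ℝ) (hα : 0 < α) (u : H) (hu : ‖u‖ = 1) (hres : ‖A u - μ • u‖ ≤ α) :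
    (∃ μi : ℝ, Module.End.HasEigenvalue A μi ∧ |μi - μ| ≤ α) ∧
    (∀ β : ℝ, α < β → ∃ ub : H, ‖ub‖ = 1 ∧ ‖u - ub‖ ≤ 2 * α / β ∧
      ub ∈ ⨆ t ∈ Set.Icc (μ - β) (μ + β), Module.End.eigenspace A t) := by
  have hA' : A.IsSymmetric := fun x y => hA x y
  set n := Module.finrank ℝ H with hn'
  have hn : Module.finrank ℝ H = n := rfl
  set b := hA'.eigenvectorBasis hn with hb
  set lam := hA'.eigenvalues hn with hlam
  set c : Fin n → ℝ := fun i => b.repr u i with hc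
  -- norm squared identities
  have hrepr : ∀ i, b.repr (A u - μ • u) i = (lam i - μ) * c i := by
    intro i
    rw [map_sub, map_smul]
    have := hA'.eigenvectorBasis_apply_self_apply hn u i
    simp only [PiLp.sub_apply, PiLp.smul_apply, this, smul_eq_mul, hlam, hc]
    norm_num [RCLike.ofReal_real_eq_id]
    rw [show (b.repr (A u)).ofLp i = _ from this, RCLike.ofReal_real_eq_id, id_eq]
    ring
  have hnorm_sq : ∀ x : H, ‖x‖ ^ 2 = ∑ i, (b.repr x i) ^ 2 := by
    intro x
    rw [← b.repr.norm_map x, EuclideanSpace.norm_eq, Real.sq_sqrt (by positivity)]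
    simp [sq_abs]
  have hu2 : ∑ i, (c i) ^ 2 = 1 := by
    have := hnorm_sq u
    rw [hu] at this; simpa using this.symm
  have hres2 : ∑ i, ((lam i - μ) * c i) ^ 2 ≤ α ^ 2 := by
    calc ∑ i, ((lam i - μ) * c i) ^ 2 = ‖A u - μ • u‖ ^ 2 := by
          rw [hnorm_sq]; exact Finset.sum_congr rfl fun i _ => by rw [hrepr i]
      _ ≤ α ^ 2 := by
          have := norm_nonneg (A u - μ • u)
          nlinarith
  constructor
  · -- part (i)
    by_contra h
    push_neg at h
    have hzero : ∀ i, c i = 0 := by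
      intro i
      by_contra hci
      have h1 : ∀ j, α ^ 2 * (c j) ^ 2 ≤ ((lam j - μ) * c j) ^ 2 := by
        intro j
        have := h (lam j) (hA'.hasEigenvalue_eigenvalues hn j)
        have h2 : α < |lam j - μ| := by linarith [this]
        have h3 : α ^ 2 ≤ (lam j - μ) ^ 2 := by
          nlinarith [abs_nonneg (lam j - μ), sq_abs (lam j - μ)]
        nlinarith [sq_nonneg (c j)]
      have hstrict : α ^ 2 * (c i) ^ 2 < ((lam i - μ) * c i) ^ 2 := by
        have := h (lam i) (hA'.hasEigenvalue_eigenvalues hn i)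
        have h2 : α < |lam i - μ| := by linarith [this]
        have h3 : α ^ 2 < (lam i - μ) ^ 2 := by
          nlinarith [abs_nonneg (lam i - μ), sq_abs (lam i - μ)]
        have h4 : 0 < (c i) ^ 2 := by positivity
        nlinarith
      have := Finset.sum_lt_sum (fun j _ => h1 j) ⟨i, Finset.mem_univ i, hstrict⟩
      rw [← Finset.mul_sum, hu2, mul_one] at this
      linarith [hres2]
    have : (1 : ℝ) = 0 := by
      rw [← hu2]; simp [hzero]
    norm_num at this
  · -- part (ii)
    intro β hβ
    have hβ0 : 0 < β := lt_trans hα hβ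
    classical
    set w : H := b.repr.symm (WithLp.toLp 2 (fun i => if |lam i - μ| ≤ β then c i else 0)) with hw
    have hreprw : ∀ i, b.repr w i = if |lam i - μ| ≤ β then c i else 0 := by
      intro i; rw [hw, LinearIsometryEquiv.apply_symm_apply]
    have huw_sq : ‖u - w‖ ^ 2 = ∑ i, (if |lam i - μ| ≤ β then 0 else c i ^ 2) := by
      rw [hnorm_sq]
      refine Finset.sum_congr rfl fun i _ => ?_
      rw [map_sub]
      simp only [PiLp.sub_apply, hreprw i]
      split <;> simp [c]
    have hbound : β ^ 2 * ‖u - w‖ ^ 2 ≤ α ^ 2 := by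
      rw [huw_sq, Finset.mul_sum]
      refine le_trans (Finset.sum_le_sum (fun i _ => ?_)) hres2
      split
      · simp; positivity
      · rename_i hne
        push_neg at hne
        have : β ^ 2 ≤ (lam i - μ) ^ 2 := by
          nlinarith [abs_nonneg (lam i - μ), sq_abs (lam i - μ)]
        nlinarith [sq_nonneg (c i)]
    have huw : ‖u - w‖ ≤ α / β := by
      rw [le_div_iff₀ hβ0]
      nlinarith [norm_nonneg (u - w), sq_nonneg (‖u - w‖ * β - α)]
    have hwn : 1 - α / β ≤ ‖w‖ := by
      have := norm_sub_norm_le u w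
      rw [hu] at this
      linarith
    have hαβ : α / β < 1 := (div_lt_one hβ0).mpr hβ
    have hw0 : 0 < ‖w‖ := by linarith
    refine ⟨‖w‖⁻¹ • w, ?_, ?_, ?_⟩
    · rw [norm_smul, norm_inv, norm_norm, inv_mul_cancel₀ (ne_of_gt hw0)]
    · have h1 : ‖w - ‖w‖⁻¹ • w‖ = |‖w‖ - 1| := by
        have : w - ‖w‖⁻¹ • w = (1 - ‖w‖⁻¹) • w := by
          rw [sub_smul, one_smul]
        rw [this, norm_smul, Real.norm_eq_abs, ← abs_of_pos hw0, ← abs_mul]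
        congr 1
        field_simp
        rw [abs_of_pos hw0]; ring
      have h2 : |‖w‖ - 1| ≤ ‖u - w‖ := by
        have := abs_norm_sub_norm_le w u
        rw [hu, norm_sub_rev] at this
        exact this
      calc ‖u - ‖w‖⁻¹ • w‖ ≤ ‖u - w‖ + ‖w - ‖w‖⁻¹ • w‖ := by
            have := norm_sub_le_norm_sub_add_norm_sub u w (‖w‖⁻¹ • w)
            exact this
        _ ≤ α / β + α / β := by rw [h1]; exact add_le_add huw (le_trans h2 huw)
        _ = 2 * α / β := by ring
    · have hwsum : w = ∑ i, (if |lam i - μ| ≤ β then c i else 0) • b i := by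
        rw [hw, ← b.sum_repr_symm]
      rw [hwsum]
      refine Submodule.smul_mem _ _ (Submodule.sum_mem _ fun i _ => ?_)
      split
      · rename_i hi
        refine Submodule.smul_mem _ _ ?_
        have hmem : b i ∈ Module.End.eigenspace A (lam i) :=
          (hA'.hasEigenvector_eigenvectorBasis hn i).1
        have ht : lam i ∈ Set.Icc (μ - β) (μ + β) := by
          rw [Set.mem_Icc]
          rw [abs_le] at hi
          constructor <;> linarith
        exact le_iSup₂ (f := fun t (_ : t ∈ Set.Icc (μ - β) (μ + β)) =>
          Module.End.eigenspace A t) (lam i) ht hmem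
      · simp
end
end

section
/- Fix k, l ∈ ℕ, γ > 0 and d ≥ 2. Let (a_n) be positive reals such that for all ζ ≥ 0: lim_{n→∞} |B_n|·ℙ[π_0 ≤ a_n ζ] = ζ^{2dγ} and lim_{n→∞} |B_n|·ℙ[π_0 ≤ a_n ζ and π_{e₁} ≤ a_n ζ] = 0, where e₁ is a nearest neighbor of the origin. Then for every ζ ≥ 0: lim_{n→∞} sup_{A ⊂ B_n, |A| = k−1} Σ_{m=1}^{l} Σ_{q=1}^{m−1} Σ_{M ⊂ B_n \ (A ∪ ∂A), |M| = m, |CC(M)| = q} ℙ[ π_x ≤ a_n ζ for all x ∈ M ] = 0. -/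
open MeasureTheory ProbabilityTheory Filter

noncomputable section

/-- `A ∪ ∂A`: the set together with its outer site boundary. -/
def closNbr {d : ℕ} (A : Finset (V d)) : Finset (V d) := A ∪ A.biUnion nbrs

open scoped Classical in
/-- The number `|CC(M)|` of connected components of `M` in the nearest-neighbor
graph on `ℤ^d`. -/
def ncc {d : ℕ} (M : Finset (V d)) : ℕ :=
  (M.image (fun x => M.filter (fun y =>
    Relation.ReflTransGen (fun a b => adj a b ∧ a ∈ M ∧ b ∈ M) x y))).card

namespace ClusterAux

variable {d : ℕ}

/-- unit vector -/
def uv (i : Fin d) : V d := Pi.single i 1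

lemma uv_apply (i j : Fin d) : uv i j = if j = i then 1 else 0 := by
  simp [uv, Pi.single_apply]

lemma uv_injective : Function.Injective (uv (d := d)) := by
  intro i j h
  by_contra hne
  have := congrFun h i
  rw [uv_apply, uv_apply, if_pos rfl, if_neg hne] at this
  exact absurd this (by norm_num)

lemma sum_eq_one_int (f : Fin d → ℤ) (h0 : ∀ i, 0 ≤ f i) (h : ∑ i, f i = 1) :
    ∃ i, f i = 1 ∧ ∀ j, j ≠ i → f j = 0 := by
  have hne : ∃ i ∈ Finset.univ, f i ≠ 0 := by
    by_contra hc
    push_neg at hc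
    have : ∑ i, f i = 0 := Finset.sum_eq_zero (fun i hi => hc i hi)
    omega
  obtain ⟨i, -, hi⟩ := hne
  have hi1 : 1 ≤ f i := lt_of_le_of_ne (h0 i) (Ne.symm hi)
  have hsplit : f i + ∑ j ∈ Finset.univ.erase i, f j = 1 := by
    rw [Finset.add_sum_erase _ _ (Finset.mem_univ i)] at *
    exact h
  have hrest0 : 0 ≤ ∑ j ∈ Finset.univ.erase i, f j :=
    Finset.sum_nonneg (fun j _ => h0 j)
  have hfi : f i = 1 := by omega
  have hrest : ∑ j ∈ Finset.univ.erase i, f j = 0 := by omega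
  refine ⟨i, hfi, fun j hj => ?_⟩
  have := (Finset.sum_eq_zero_iff_of_nonneg (fun j _ => h0 j)).mp hrest j
    (Finset.mem_erase.mpr ⟨hj, Finset.mem_univ j⟩)
  exact this

lemma adj_iff {x y : V d} : adj x y ↔ ∃ i, y = x + uv i ∨ y = x - uv i := by
  constructor
  · intro h
    obtain ⟨i, hi1, hi0⟩ := sum_eq_one_int (fun i => |x i - y i|)
      (fun i => abs_nonneg _) h
    refine ⟨i, ?_⟩
    have : x i - y i = 1 ∨ x i - y i = -1 := by
      rcases abs_eq (by norm_num : (0:ℤ) ≤ 1) |>.mp hi1 with h' | h'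
      · exact Or.inl h'
      · exact Or.inr h'
    rcases this with h' | h'
    · right
      funext j
      simp only [Pi.sub_apply, uv_apply]
      rcases eq_or_ne j i with rfl | hj
      · rw [if_pos rfl]; omega
      · have h0 := hi0 j hj
        rw [abs_eq_zero] at h0
        rw [if_neg hj]; omega
    · left
      funext j
      simp only [Pi.add_apply, uv_apply]
      rcases eq_or_ne j i with rfl | hj
      · rw [if_pos rfl]; omega
      · have h0 := hi0 j hj
        rw [abs_eq_zero] at h0
        rw [if_neg hj]; omega
  · rintro ⟨i, rfl | rfl⟩ <;>
    · unfold adj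
      rw [Finset.sum_congr rfl (fun j _ => show _ = if j = i then (1:ℤ) else 0 by
        simp only [Pi.add_apply, Pi.sub_apply, uv_apply]
        split <;> simp),
        Finset.sum_ite_eq' Finset.univ i (fun _ => (1:ℤ))]
      simp

lemma adj_comm {x y : V d} : adj x y ↔ adj y x := by
  unfold adj
  rw [Finset.sum_congr rfl (fun j _ => abs_sub_comm (x j) (y j))]

lemma adj_irrefl (x : V d) : ¬ adj x x := by
  unfold adj; simp

/-- neighbor enumeration -/
def nb (z : V d) : Fin d ⊕ Fin d → V d
  | .inl i => z + uv i
  | .inr i => z - uv i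

lemma uv_ne_zero (i : Fin d) : uv i ≠ 0 := by
  intro h
  have := congrFun h i
  simp [uv_apply] at this

lemma nb_injective (z : V d) : Function.Injective (nb z) := by
  rintro (i | i) (j | j) h <;> simp only [nb] at h
  · have : uv i = uv j := by
      funext t
      have ht := congrFun h t
      simp only [Pi.add_apply] at ht
      omega
    rw [uv_injective this]
  · exfalso
    have ht := congrFun h i
    simp only [Pi.add_apply, Pi.sub_apply] at ht
    have h1 : uv i i = 1 := by rw [uv_apply, if_pos rfl]
    have h2 : (0:ℤ) ≤ uv j i := by rw [uv_apply]; split <;> norm_num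
    omega
  · exfalso
    have ht := congrFun h j
    simp only [Pi.add_apply, Pi.sub_apply] at ht
    have h1 : uv j j = 1 := by rw [uv_apply, if_pos rfl]
    have h2 : (0:ℤ) ≤ uv i j := by rw [uv_apply]; split <;> norm_num
    omega
  · have : uv i = uv j := by
      funext t
      have ht := congrFun h t
      simp only [Pi.sub_apply] at ht
      omega
    rw [uv_injective this]

lemma adj_iff_nb {z y : V d} : adj z y ↔ ∃ u, nb z u = y := by
  rw [adj_iff]
  constructor
  · rintro ⟨i, rfl | rfl⟩
    · exact ⟨Sum.inl i, rfl⟩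
    · exact ⟨Sum.inr i, rfl⟩
  · rintro ⟨(i | i), rfl⟩
    · exact ⟨i, Or.inl rfl⟩
    · exact ⟨i, Or.inr rfl⟩

lemma mem_Icc_of_adj {z y : V d} (h : adj z y) : y ∈ Finset.Icc (z - 1) (z + 1) := by
  rw [Finset.mem_Icc]
  rw [adj_iff] at h
  obtain ⟨i, rfl | rfl⟩ := h <;> constructor <;> intro j <;>
    simp only [Pi.add_apply, Pi.sub_apply, Pi.one_apply, uv_apply] <;> split <;> omega

lemma nbrs_eq (z : V d) : nbrs z = Finset.univ.image (nb z) := by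
  ext y
  simp only [nbrs, Finset.mem_filter, Finset.mem_image, Finset.mem_univ, true_and]
  constructor
  · rintro ⟨-, h⟩
    exact adj_iff_nb.mp h
  · rintro ⟨u, rfl⟩
    have hadj : adj z (nb z u) := adj_iff_nb.mpr ⟨u, rfl⟩
    exact ⟨mem_Icc_of_adj hadj, hadj⟩

lemma card_nbrs_le (z : V d) : (nbrs z).card ≤ 2 * d := by
  rw [nbrs_eq]
  calc (Finset.univ.image (nb z)).card ≤ (Finset.univ : Finset (Fin d ⊕ Fin d)).card :=
        Finset.card_image_le
    _ = 2 * d := by simp [Fintype.card_sum]; ring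

end ClusterAux

namespace ClusterAux

variable {d : ℕ}

/-- Edge enumeration around a site: the 2d edges incident to `z`. -/
def eAt (z : V d) : Fin d ⊕ Fin d → V d × Fin d
  | .inl i => (z, i)
  | .inr i => (z - uv i, i)

lemma sub_uv_ne (z : V d) (i : Fin d) : z - uv i ≠ z := by
  intro h
  have := congrFun h i
  simp only [Pi.sub_apply] at this
  have h1 : uv i i = 1 := by rw [uv_apply, if_pos rfl]
  omega

lemma eAt_injective (z : V d) : Function.Injective (eAt z) := by
  rintro (i | i) (j | j) h <;> simp only [eAt, Prod.mk.injEq] at h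
  · rw [h.2]
  · exact absurd h.1.symm (h.2 ▸ sub_uv_ne z j)
  · exact absurd h.1 (h.2 ▸ sub_uv_ne z j)
  · obtain ⟨h1, rfl⟩ := h
    rfl

/-- The set of edges incident to a site. -/
def edges (z : V d) : Finset (V d × Fin d) := Finset.univ.image (eAt z)

lemma mem_edges {z : V d} {p : V d × Fin d} :
    p ∈ edges z ↔ p.1 = z ∨ p.1 + uv p.2 = z := by
  simp only [edges, Finset.mem_image, Finset.mem_univ, true_and]
  constructor
  · rintro ⟨(i | i), rfl⟩
    · exact Or.inl rfl
    · right
      funext t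
      simp only [eAt, Pi.add_apply, Pi.sub_apply]
      omega
  · rintro (h | h)
    · exact ⟨Sum.inl p.2, by simp only [eAt, ← h]⟩
    · refine ⟨Sum.inr p.2, ?_⟩
      have : z - uv p.2 = p.1 := by
        funext t
        have := congrFun h t
        simp only [Pi.add_apply] at this
        simp only [Pi.sub_apply]
        omega
      simp only [eAt, this]

lemma adj_of_add_uv {b : V d} {i : Fin d} : adj b (b + uv i) :=
  adj_iff.mpr ⟨i, Or.inl rfl⟩

lemma edges_disjoint {z z' : V d} (hne : z ≠ z') (hnadj : ¬ adj z z') :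
    Disjoint (edges z) (edges z') := by
  rw [Finset.disjoint_left]
  intro p hp hp'
  rw [mem_edges] at hp hp'
  rcases hp with h1 | h1 <;> rcases hp' with h2 | h2
  · exact hne (h1 ▸ h2 ▸ rfl)
  · exact hnadj (by rw [← h1, ← h2]; exact adj_of_add_uv)
  · exact hnadj (by rw [← h1, ← h2]; exact adj_comm.mpr adj_of_add_uv)
  · exact hne (h1 ▸ h2 ▸ rfl)

/-- the only edge incident to both `x` and `y = x + uv j` is `(x, j)`. -/
lemma shared_edge {x y : V d} {j : Fin d} (hy : y = x + uv j) {p : V d × Fin d}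
    (hx : p ∈ edges x) (hyp : p ∈ edges y) : p = (x, j) := by
  have hne : x ≠ y := by
    rw [hy]; intro h
    have := congrFun h j
    simp only [Pi.add_apply] at this
    have h1 : uv j j = 1 := by rw [uv_apply, if_pos rfl]
    omega
  rw [mem_edges] at hx hyp
  rcases hx with h1 | h1 <;> rcases hyp with h2 | h2
  · exact absurd (h1 ▸ h2 ▸ rfl) hne
  · -- p.1 = x and p.1 + uv p.2 = y = x + uv j : so uv p.2 = uv j
    have : uv p.2 = uv j := by
      funext t
      have := congrFun (h2.trans hy) t
      simp only [Pi.add_apply, h1] at this ⊢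
      have h3 := congrFun h1 t
      omega
    have hpj : p.2 = j := uv_injective this
    exact Prod.ext h1 hpj
  · -- p.1 + uv p.2 = x, p.1 = y : y + uv p.2 = x, y = x + uv j: x + uv j + uv p.2 = x
    exfalso
    have h3 : ∀ t, x t + uv j t + uv p.2 t = x t := by
      intro t
      have := congrFun h2 t
      have h4 := congrFun h1 t
      have h5 := congrFun hy t
      simp only [Pi.add_apply] at *
      omega
    have := h3 j
    have h1j : uv j j = 1 := by rw [uv_apply, if_pos rfl]
    have h2j : (0:ℤ) ≤ uv p.2 j := by rw [uv_apply]; split <;> norm_num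
    omega
  · exact absurd (h1 ▸ h2 ▸ rfl) hne

lemma pair_sub_uv {x y : V d} {j : Fin d} (hy : y = x + uv j) : y - uv j = x := by
  funext t
  have := congrFun hy t
  simp only [Pi.add_apply, Pi.sub_apply] at *
  omega

/-- The speed as a sum over the incident edges, in canonical (base, direction) form. -/
lemma speed_eq_sum_edges (w : V d → V d → ℝ) (hsym : ∀ x y, w x y = w y x) (z : V d) :
    speed w z = ∑ u : Fin d ⊕ Fin d, w (eAt z u).1 ((eAt z u).1 + uv (eAt z u).2) := by
  rw [speed, nbrs_eq, Finset.sum_image (fun a _ b _ h => nb_injective z h)]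
  refine Finset.sum_congr rfl (fun u _ => ?_)
  rcases u with i | i
  · simp only [nb, eAt]
  · simp only [nb, eAt]
    rw [hsym]
    congr 1
    funext t
    simp only [Pi.sub_apply, Pi.add_apply]
    omega

lemma speed_eq_sum_edges' (w : V d → V d → ℝ) (hsym : ∀ x y, w x y = w y x) (z : V d) :
    speed w z = ∑ p ∈ edges z, w p.1 (p.1 + uv p.2) := by
  rw [speed_eq_sum_edges w hsym z, edges,
    Finset.sum_image (fun a _ b _ h => eAt_injective z h)]

lemma card_edges (z : V d) : (edges z).card = 2 * d := by
  rw [edges, Finset.card_image_of_injective _ (eAt_injective z)]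
  simp [Fintype.card_sum]
  ring

end ClusterAux


namespace ClusterAux

variable {d : ℕ} {Ω : Type*} [MeasurableSpace Ω] {P : Measure Ω} [IsProbabilityMeasure P]
  {w : Ω → V d → V d → ℝ}

/-- The edge random variable. -/
def X (w : Ω → V d → V d → ℝ) (p : V d × Fin d) (ω : Ω) : ℝ := w ω p.1 (p.1 + uv p.2)

section Law

variable (hsym : ∀ ω x y, w ω x y = w ω y x)
  (hmeas : ∀ x y : V d, Measurable fun ω => w ω x y)
  (hind : iIndepFun
    (fun (p : V d × Fin d) ω => w ω p.1 (p.1 + Pi.single p.2 1)) P)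
  {F : ℝ → ℝ}
  (hF : ∀ (x : V d) (i : Fin d) (u : ℝ),
    (P {ω | w ω x (x + Pi.single i 1) ≤ u}).toReal = F u)

include hmeas in
lemma measurable_X (p : V d × Fin d) : Measurable (X w p) := hmeas _ _

include hmeas in
lemma measurable_speed (z : V d) : Measurable fun ω => speed (w ω) z :=
  Finset.measurable_sum _ (fun y _ => hmeas z y)

include hmeas hF in
lemma map_X_eq (p q : V d × Fin d) :
    Measure.map (X w p) P = Measure.map (X w q) P := by
  haveI h1 : IsProbabilityMeasure (Measure.map (X w p) P) :=
    Measure.isProbabilityMeasure_map (measurable_X hmeas p).aemeasurable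
  haveI h2 : IsProbabilityMeasure (Measure.map (X w q) P) :=
    Measure.isProbabilityMeasure_map (measurable_X hmeas q).aemeasurable
  refine MeasureTheory.Measure.ext_of_Iic _ _ (fun u => ?_)
  rw [Measure.map_apply (measurable_X hmeas p) measurableSet_Iic,
    Measure.map_apply (measurable_X hmeas q) measurableSet_Iic]
  have e1 : X w p ⁻¹' Set.Iic u = {ω | w ω p.1 (p.1 + Pi.single p.2 1) ≤ u} := rfl
  have e2 : X w q ⁻¹' Set.Iic u = {ω | w ω q.1 (q.1 + Pi.single q.2 1) ≤ u} := rfl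
  rw [e1, e2]
  refine (ENNReal.toReal_eq_toReal_iff' (measure_ne_top P _) (measure_ne_top P _)).mp ?_
  rw [hF p.1 p.2 u, hF q.1 q.2 u]

include hmeas hind in
lemma tuple_law {κ : Type*} [Fintype κ] [Nonempty κ] (σ : κ → V d × Fin d)
    (hσ : Function.Injective σ) :
    Measure.map (fun ω (i : κ) => X w (σ i) ω) P
      = Measure.pi (fun i => Measure.map (X w (σ i)) P) := by
  classical
  haveI : ∀ i : κ, SigmaFinite (Measure.map (X w (σ i)) P) := fun i => by
    haveI : IsProbabilityMeasure (Measure.map (X w (σ i)) P) :=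
      Measure.isProbabilityMeasure_map (measurable_X hmeas _).aemeasurable
    infer_instance
  refine (Measure.pi_eq (fun s hs => ?_)).symm
  rw [Measure.map_apply (measurable_pi_lambda _ fun i => measurable_X hmeas _)
    (MeasurableSet.pi (Set.to_countable _) (fun i _ => hs i))]
  have hpre : (fun ω (i : κ) => X w (σ i) ω) ⁻¹' Set.pi Set.univ s
      = ⋂ i, X w (σ i) ⁻¹' s i := by
    ext ω
    simp [Set.mem_pi]
  rw [hpre]
  have hXdef : ∀ p : V d × Fin d, X w p = fun ω => w ω p.1 (p.1 + Pi.single p.2 1) := fun p => rfl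
  set sets : (V d × Fin d) → Set ℝ := fun p => s (Function.invFun σ p) with hsets
  have hinter : ⋂ i, X w (σ i) ⁻¹' s i
      = ⋂ p ∈ Finset.univ.image σ, (fun ω => w ω p.1 (p.1 + Pi.single p.2 1)) ⁻¹' sets p := by
    ext ω
    simp only [Set.mem_iInter, Set.mem_preimage, Finset.mem_image, Finset.mem_univ, true_and]
    constructor
    · rintro h p ⟨i, rfl⟩
      have : sets (σ i) = s i := by rw [hsets]; simp [Function.leftInverse_invFun hσ i]
      rw [this]
      exact h i
    · intro h i
      have h2 := h (σ i) ⟨i, rfl⟩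
      have : sets (σ i) = s i := by rw [hsets]; simp [Function.leftInverse_invFun hσ i]
      rw [this] at h2
      exact h2
  rw [hinter, hind.measure_inter_preimage_eq_mul (Finset.univ.image σ) (fun p _ => hs _),
    Finset.prod_image (fun a _ b _ h => hσ h)]
  refine Finset.prod_congr rfl (fun i _ => ?_)
  rw [Measure.map_apply (measurable_X hmeas _) (hs i)]
  rw [hXdef (σ i), Function.leftInverse_invFun hσ i]

include hsym hmeas hind hF in
lemma event_tuple_eq {κ : Type*} [Fintype κ] [Nonempty κ] (σ σ' : κ → V d × Fin d)
    (hσ : Function.Injective σ) (hσ' : Function.Injective σ')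
    {B : Set (κ → ℝ)} (hB : MeasurableSet B) :
    P ((fun ω (i : κ) => X w (σ i) ω) ⁻¹' B)
      = P ((fun ω (i : κ) => X w (σ' i) ω) ⁻¹' B) := by
  rw [← Measure.map_apply (measurable_pi_lambda _ fun i => measurable_X hmeas _) hB,
    ← Measure.map_apply (measurable_pi_lambda _ fun i => measurable_X hmeas _) hB,
    tuple_law hmeas hind σ hσ, tuple_law hmeas hind σ' hσ']
  have : (fun i : κ => Measure.map (X w (σ i)) P) = fun i => Measure.map (X w (σ' i)) P :=
    funext fun i => map_X_eq hmeas hF _ _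
  rw [this]

include hsym hmeas hind hF in
lemma single_prob_eq (hd : 0 < d) (z z' : V d) (t : ℝ) :
    P {ω | speed (w ω) z ≤ t} = P {ω | speed (w ω) z' ≤ t} := by
  haveI : Nonempty (Fin d ⊕ Fin d) := ⟨Sum.inl ⟨0, hd⟩⟩
  have hB : MeasurableSet {v : (Fin d ⊕ Fin d) → ℝ | ∑ u, v u ≤ t} :=
    measurableSet_le (Finset.measurable_sum _ (fun u _ => measurable_pi_apply u))
      measurable_const
  have h1 : ∀ z₁ : V d, {ω | speed (w ω) z₁ ≤ t}
      = (fun ω (u : Fin d ⊕ Fin d) => X w (eAt z₁ u) ω) ⁻¹' {v | ∑ u, v u ≤ t} := by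
    intro z₁
    ext ω
    simp only [Set.mem_setOf_eq, Set.mem_preimage]
    rw [speed_eq_sum_edges (w ω) (hsym ω) z₁]
    rfl
  rw [h1 z, h1 z', event_tuple_eq hsym hmeas hind hF _ _ (eAt_injective z) (eAt_injective z') hB]

end Law

end ClusterAux


namespace ClusterAux

variable {d : ℕ} {Ω : Type*} [MeasurableSpace Ω] {P : Measure Ω} [IsProbabilityMeasure P]
  {w : Ω → V d → V d → ℝ}

section Law

variable (hsym : ∀ ω x y, w ω x y = w ω y x)
  (hmeas : ∀ x y : V d, Measurable fun ω => w ω x y)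
  (hind : iIndepFun
    (fun (p : V d × Fin d) ω => w ω p.1 (p.1 + Pi.single p.2 1)) P)
  {F : ℝ → ℝ}
  (hF : ∀ (x : V d) (i : Fin d) (u : ℝ),
    (P {ω | w ω x (x + Pi.single i 1) ≤ u}).toReal = F u)

include hsym in
lemma speed_split (z : V d) (a : Fin d ⊕ Fin d) (ω : Ω) :
    speed (w ω) z = X w (eAt z a) ω + ∑ u : {u : Fin d ⊕ Fin d // u ≠ a}, X w (eAt z ↑u) ω := by
  classical
  rw [speed_eq_sum_edges (w ω) (hsym ω) z,
    ← Finset.add_sum_erase _ _ (Finset.mem_univ a)]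
  congr 1
  exact Finset.sum_subtype (Finset.univ.erase a)
    (fun u => by simp [Finset.mem_erase]) (fun u => X w (eAt z u) ω)

lemma eAt_mem_edges (z : V d) (u : Fin d ⊕ Fin d) : eAt z u ∈ edges z :=
  Finset.mem_image.mpr ⟨u, Finset.mem_univ u, rfl⟩

lemma card_ne_eq (a b : Fin d ⊕ Fin d) :
    Fintype.card {u : Fin d ⊕ Fin d // u ≠ a} = Fintype.card {u : Fin d ⊕ Fin d // u ≠ b} := by
  rw [Fintype.card_subtype_compl, Fintype.card_subtype_compl,
    Fintype.card_subtype_eq, Fintype.card_subtype_eq]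

include hsym hmeas hind hF in
lemma pair_prob_eq (x x' : V d) (j j' : Fin d) (t : ℝ) :
    P {ω | speed (w ω) x ≤ t ∧ speed (w ω) (x + uv j) ≤ t}
      = P {ω | speed (w ω) x' ≤ t ∧ speed (w ω) (x' + uv j') ≤ t} := by
  classical
  set κ := Option ({u : Fin d ⊕ Fin d // u ≠ Sum.inl j} ⊕ {u : Fin d ⊕ Fin d // u ≠ Sum.inr j})
    with hκ
  set B : Set (κ → ℝ) := {v | v none + ∑ u : {u : Fin d ⊕ Fin d // u ≠ Sum.inl j},
        v (some (Sum.inl u)) ≤ t ∧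
      v none + ∑ u : {u : Fin d ⊕ Fin d // u ≠ Sum.inr j}, v (some (Sum.inr u)) ≤ t} with hBdef
  have hBm : MeasurableSet B := by
    have h1 : Measurable fun v : κ → ℝ => v none + ∑ u : {u : Fin d ⊕ Fin d // u ≠ Sum.inl j},
        v (some (Sum.inl u)) :=
      (measurable_pi_apply none).add
        (Finset.measurable_sum _ (fun u _ => measurable_pi_apply _))
    have h2 : Measurable fun v : κ → ℝ => v none + ∑ u : {u : Fin d ⊕ Fin d // u ≠ Sum.inr j},
        v (some (Sum.inr u)) :=
      (measurable_pi_apply none).add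
        (Finset.measurable_sum _ (fun u _ => measurable_pi_apply _))
    exact (measurableSet_le h1 measurable_const).inter (measurableSet_le h2 measurable_const)
  have key : ∀ (x₁ : V d) (j₁ : Fin d)
      (eL : {u : Fin d ⊕ Fin d // u ≠ Sum.inl j} ≃ {u : Fin d ⊕ Fin d // u ≠ Sum.inl j₁})
      (eR : {u : Fin d ⊕ Fin d // u ≠ Sum.inr j} ≃ {u : Fin d ⊕ Fin d // u ≠ Sum.inr j₁}),
      ∃ σ : κ → V d × Fin d, Function.Injective σ ∧
        (fun ω (i : κ) => X w (σ i) ω) ⁻¹' B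
          = {ω | speed (w ω) x₁ ≤ t ∧ speed (w ω) (x₁ + uv j₁) ≤ t} := by
    intro x₁ j₁ eL eR
    set y₁ := x₁ + uv j₁ with hy₁
    have hsub : y₁ - uv j₁ = x₁ := pair_sub_uv rfl
    have heAty : eAt y₁ (Sum.inr j₁) = (x₁, j₁) := by
      simp only [eAt, hsub]
    refine ⟨fun c => match c with
      | none => (x₁, j₁)
      | some (Sum.inl u) => eAt x₁ ↑(eL u)
      | some (Sum.inr u) => eAt y₁ ↑(eR u), ?_, ?_⟩
    · -- injectivity
      have hL : ∀ u, eAt x₁ ↑(eL u) ≠ (x₁, j₁) := by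
        intro u h
        have : (eL u : Fin d ⊕ Fin d) = Sum.inl j₁ := eAt_injective x₁ (h.trans rfl)
        exact (eL u).2 this
      have hR : ∀ u, eAt y₁ ↑(eR u) ≠ (x₁, j₁) := by
        intro u h
        have : (eR u : Fin d ⊕ Fin d) = Sum.inr j₁ := eAt_injective y₁ (h.trans heAty.symm)
        exact (eR u).2 this
      have hLR : ∀ u u', eAt x₁ ↑(eL u) ≠ eAt y₁ ↑(eR u') := by
        intro u u' h
        have hmem : eAt x₁ ↑(eL u) ∈ edges x₁ := eAt_mem_edges _ _
        have hmem' : eAt x₁ ↑(eL u) ∈ edges y₁ := h ▸ eAt_mem_edges _ _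
        exact hL u (shared_edge rfl hmem hmem')
      rintro (_ | (u | u)) (_ | (u' | u')) h <;> simp only [] at h
      · rfl
      · exact absurd h.symm (hL u')
      · exact absurd h.symm (hR u')
      · exact absurd h (hL u)
      · have := eAt_injective x₁ h
        rw [eL.injective (Subtype.ext this)]
      · exact absurd h (hLR u u')
      · exact absurd h (hR u)
      · exact absurd h.symm (hLR u' u)
      · have := eAt_injective y₁ h
        rw [eR.injective (Subtype.ext this)]
    · -- preimage
      ext ω
      simp only [Set.mem_preimage, hBdef, Set.mem_setOf_eq]
      have hsx : speed (w ω) x₁ = X w (x₁, j₁) ω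
          + ∑ u : {u : Fin d ⊕ Fin d // u ≠ Sum.inl j}, X w (eAt x₁ ↑(eL u)) ω := by
        rw [speed_split hsym x₁ (Sum.inl j₁) ω]
        congr 1
        exact (Equiv.sum_comp eL (fun u' => X w (eAt x₁ ↑u') ω)).symm
      have hsy : speed (w ω) y₁ = X w (x₁, j₁) ω
          + ∑ u : {u : Fin d ⊕ Fin d // u ≠ Sum.inr j}, X w (eAt y₁ ↑(eR u)) ω := by
        rw [speed_split hsym y₁ (Sum.inr j₁) ω, heAty]
        congr 1
        exact (Equiv.sum_comp eR (fun u' => X w (eAt y₁ ↑u') ω)).symm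
      rw [hsx, hsy]
  obtain ⟨σ, hσ, hpre⟩ := key x j (Equiv.refl _) (Equiv.refl _)
  obtain ⟨σ', hσ', hpre'⟩ := key x' j'
    (Fintype.equivOfCardEq (card_ne_eq _ _)) (Fintype.equivOfCardEq (card_ne_eq _ _))
  rw [← hpre, ← hpre']
  exact event_tuple_eq hsym hmeas hind hF σ σ' hσ hσ' hBm

end Law

end ClusterAux


namespace ClusterAux

variable {d : ℕ} {Ω : Type*} [MeasurableSpace Ω] {P : Measure Ω} [IsProbabilityMeasure P]
  {w : Ω → V d → V d → ℝ}

section Law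

variable (hsym : ∀ ω x y, w ω x y = w ω y x)
  (hmeas : ∀ x y : V d, Measurable fun ω => w ω x y)
  (hind : iIndepFun
    (fun (p : V d × Fin d) ω => w ω p.1 (p.1 + Pi.single p.2 1)) P)
  {F : ℝ → ℝ}
  (hF : ∀ (x : V d) (i : Fin d) (u : ℝ),
    (P {ω | w ω x (x + Pi.single i 1) ≤ u}).toReal = F u)

include hsym hmeas hind hF in
lemma pair_prob_adj {x y e₁ : V d} (hxy : adj x y) (he₁ : adj 0 e₁) (t : ℝ) :
    P {ω | speed (w ω) x ≤ t ∧ speed (w ω) y ≤ t}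
      = P {ω | speed (w ω) 0 ≤ t ∧ speed (w ω) e₁ ≤ t} := by
  have swap : ∀ u v : V d, P {ω | speed (w ω) u ≤ t ∧ speed (w ω) v ≤ t}
      = P {ω | speed (w ω) v ≤ t ∧ speed (w ω) u ≤ t} := by
    intro u v
    congr 1
    exact Set.ext fun ω => and_comm
  obtain ⟨i, hi⟩ := adj_iff.mp hxy
  obtain ⟨i₀, hi₀⟩ := adj_iff.mp he₁
  have h₀sub : ∀ z : V d, z = 0 - uv i₀ → 0 = z + uv i₀ := by
    intro z hz
    funext s
    have := congrFun hz s
    simp only [Pi.sub_apply, Pi.add_apply, Pi.zero_apply] at this ⊢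
    omega
  rcases hi with rfl | hyx
  · rcases hi₀ with h0 | h0
    · rw [h0]
      exact pair_prob_eq hsym hmeas hind hF x 0 i i₀ (t := t)
    · rw [swap 0 e₁]
      have h00 : (0 : V d) = e₁ + uv i₀ := h₀sub e₁ h0
      rw [h00]
      exact pair_prob_eq hsym hmeas hind hF x e₁ i i₀ (t := t)
  · have hx : x = y + uv i := by
      funext s
      have := congrFun hyx s
      simp only [Pi.sub_apply, Pi.add_apply] at this ⊢
      omega
    rw [swap x y, hx]
    rcases hi₀ with h0 | h0
    · rw [h0]
      exact pair_prob_eq hsym hmeas hind hF y 0 i i₀ (t := t)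
    · rw [swap 0 e₁]
      have h00 : (0 : V d) = e₁ + uv i₀ := h₀sub e₁ h0
      rw [h00]
      exact pair_prob_eq hsym hmeas hind hF y e₁ i i₀ (t := t)

end Law

/-- The speed as a function of the restricted edge configuration. -/
def speedFn (U : Finset (V d × Fin d)) (z : V d) (v : {p // p ∈ U} → ℝ) : ℝ :=
  ∑ p ∈ U.attach, if (p : V d × Fin d) ∈ edges z then v p else 0

lemma speedFn_spec (hsym : ∀ ω x y, w ω x y = w ω y x)
    (U : Finset (V d × Fin d)) (z : V d) (hsub : edges z ⊆ U) (ω : Ω) :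
    speedFn U z (fun p => X w ↑p ω) = speed (w ω) z := by
  classical
  rw [speed_eq_sum_edges' (w ω) (hsym ω) z, speedFn,
    Finset.sum_attach U (fun p => if p ∈ edges z then X w p ω else 0),
    ← Finset.sum_filter, Finset.filter_mem_eq_inter,
    Finset.inter_eq_right.mpr hsub]
  rfl

lemma measurable_speedFn (U : Finset (V d × Fin d)) (z : V d) :
    Measurable (speedFn U z) := by
  refine Finset.measurable_sum _ (fun p _ => ?_)
  by_cases h : (p : V d × Fin d) ∈ edges z
  · simpa [h] using measurable_pi_apply (X := fun _ : {p // p ∈ U} => ℝ) p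
  · simp [h]

section Law

variable (hsym : ∀ ω x y, w ω x y = w ω y x)
  (hmeas : ∀ x y : V d, Measurable fun ω => w ω x y)
  (hind : iIndepFun
    (fun (p : V d × Fin d) ω => w ω p.1 (p.1 + Pi.single p.2 1)) P)

include hsym hmeas hind in
lemma indep_prod (x y : V d) (t : ℝ) (T : Finset (V d))
    (hx : ∀ z ∈ T, z ≠ x ∧ ¬ adj z x) (hy : ∀ z ∈ T, z ≠ y ∧ ¬ adj z y)
    (hTT : ∀ z ∈ T, ∀ z' ∈ T, z ≠ z' → ¬ adj z z') :
    P ({ω | speed (w ω) x ≤ t ∧ speed (w ω) y ≤ t}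
        ∩ ⋂ z ∈ (T : Set (V d)), {ω | speed (w ω) z ≤ t})
      = P {ω | speed (w ω) x ≤ t ∧ speed (w ω) y ≤ t}
        * ∏ z ∈ T, P {ω | speed (w ω) z ≤ t} := by
  classical
  induction T using Finset.induction_on with
  | empty => simp
  | @insert z₀ T hz₀ IH =>
    set U₁ : Finset (V d × Fin d) := edges z₀ with hU₁
    set U₂ : Finset (V d × Fin d) := (edges x ∪ edges y) ∪ T.biUnion edges with hU₂
    have hdis : Disjoint U₁ U₂ := by
      rw [hU₂, Finset.disjoint_union_right, Finset.disjoint_union_right]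
      refine ⟨⟨edges_disjoint (hx z₀ (T.mem_insert_self z₀)).1 (hx z₀ (T.mem_insert_self z₀)).2,
        edges_disjoint (hy z₀ (T.mem_insert_self z₀)).1 (hy z₀ (T.mem_insert_self z₀)).2⟩, ?_⟩
      rw [Finset.disjoint_biUnion_right]
      intro z' hz'
      refine edges_disjoint (fun h => hz₀ (h ▸ hz')) ?_
      exact hTT z₀ (T.mem_insert_self z₀) z' (Finset.mem_insert_of_mem hz') (fun h => hz₀ (h ▸ hz'))
    have hIndep := hind.indepFun_finset U₁ U₂ hdis (fun p => hmeas _ _)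
    have hsub_x : edges x ⊆ U₂ := Finset.Subset.trans Finset.subset_union_left
      Finset.subset_union_left
    have hsub_y : edges y ⊆ U₂ := Finset.Subset.trans Finset.subset_union_right
      Finset.subset_union_left
    have hsub_T : ∀ z ∈ T, edges z ⊆ U₂ := fun z hz =>
      Finset.Subset.trans (Finset.subset_biUnion_of_mem edges hz) Finset.subset_union_right
    set B₁ : Set ({p // p ∈ U₁} → ℝ) := speedFn U₁ z₀ ⁻¹' Set.Iic t with hB₁
    set B₂ : Set ({p // p ∈ U₂} → ℝ) :=
      (speedFn U₂ x ⁻¹' Set.Iic t ∩ speedFn U₂ y ⁻¹' Set.Iic t)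
        ∩ ⋂ z ∈ (T : Set (V d)), speedFn U₂ z ⁻¹' Set.Iic t with hB₂
    have hB₁m : MeasurableSet B₁ := measurable_speedFn U₁ z₀ measurableSet_Iic
    have hB₂m : MeasurableSet B₂ := by
      refine MeasurableSet.inter
        ((measurable_speedFn U₂ x measurableSet_Iic).inter
          (measurable_speedFn U₂ y measurableSet_Iic)) ?_
      exact MeasurableSet.biInter T.finite_toSet.countable
        (fun z _ => measurable_speedFn U₂ z measurableSet_Iic)
    have e₀ : ∀ (z : V d) (U : Finset (V d × Fin d)), edges z ⊆ U → ∀ ω : Ω,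
        speedFn U z (fun p : {p // p ∈ U} => w ω (p : V d × Fin d).1 ((p : V d × Fin d).1 + Pi.single (p : V d × Fin d).2 1))
          = speed (w ω) z := fun z U hsub ω => speedFn_spec hsym U z hsub ω
    have hA₁ : (fun a (i : {p // p ∈ U₁}) => w a (i : V d × Fin d).1 ((i : V d × Fin d).1 + Pi.single (i : V d × Fin d).2 1)) ⁻¹' B₁
        = {ω | speed (w ω) z₀ ≤ t} := by
      ext ω
      simp only [Set.mem_preimage, hB₁, Set.mem_Iic, Set.mem_setOf_eq]
      rw [e₀ z₀ U₁ (le_refl _) ω]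
    have hA₂ : (fun a (i : {p // p ∈ U₂}) => w a (i : V d × Fin d).1 ((i : V d × Fin d).1 + Pi.single (i : V d × Fin d).2 1)) ⁻¹' B₂
        = ({ω | speed (w ω) x ≤ t ∧ speed (w ω) y ≤ t}
            ∩ ⋂ z ∈ (T : Set (V d)), {ω | speed (w ω) z ≤ t}) := by
      ext ω
      simp only [Set.mem_preimage, hB₂, Set.mem_Iic, Set.mem_setOf_eq, Set.mem_inter_iff,
        Set.mem_iInter]
      rw [e₀ x U₂ hsub_x ω, e₀ y U₂ hsub_y ω]
      constructor
      · rintro ⟨⟨h1, h2⟩, h3⟩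
        exact ⟨⟨h1, h2⟩, fun z hz => by
          have := h3 z hz
          rwa [e₀ z U₂ (hsub_T z hz) ω] at this⟩
      · rintro ⟨⟨h1, h2⟩, h3⟩
        exact ⟨⟨h1, h2⟩, fun z hz => by
          rw [e₀ z U₂ (hsub_T z hz) ω]
          exact h3 z hz⟩
    have hmul := hIndep.measure_inter_preimage_eq_mul B₁ B₂ hB₁m hB₂m
    rw [hA₁, hA₂] at hmul
    have hIH := IH (fun z hz => hx z (Finset.mem_insert_of_mem hz))
      (fun z hz => hy z (Finset.mem_insert_of_mem hz))
      (fun z hz z' hz' => hTT z (Finset.mem_insert_of_mem hz) z' (Finset.mem_insert_of_mem hz'))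
    rw [Finset.coe_insert, Set.biInter_insert, Set.inter_left_comm, hmul, hIH,
      Finset.prod_insert hz₀]
    ring
end Law

end ClusterAux


namespace ClusterAux

variable {d : ℕ}

lemma ncc_eq_card_of_no_adj (M : Finset (V d)) (h : ∀ x ∈ M, ∀ y ∈ M, ¬ adj x y) :
    ncc M = M.card := by
  classical
  have hrel : ∀ a b : V d, ¬ (adj a b ∧ a ∈ M ∧ b ∈ M) :=
    fun a b hab => h a hab.2.1 b hab.2.2 hab.1
  rw [ncc]
  have himg : ∀ x ∈ M, M.filter (fun y =>
      Relation.ReflTransGen (fun a b => adj a b ∧ a ∈ M ∧ b ∈ M) x y) = {x} := by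
    intro x hx
    ext y
    simp only [Finset.mem_filter, Finset.mem_singleton]
    constructor
    · rintro ⟨hy, hRT⟩
      exact (Relation.reflTransGen_iff_eq (fun b hb => hrel x b hb)).mp hRT
    · rintro rfl
      exact ⟨hx, Relation.ReflTransGen.refl⟩
  rw [Finset.image_congr (fun x hx => himg x hx)]
  rw [Finset.card_image_of_injOn (fun x _ y _ hxy => Finset.singleton_injective hxy)]

/-- Self-membership in the little box. -/
lemma self_mem_littleBox (u : V d) : u ∈ Finset.Icc (u - 1) (u + 1) := by
  rw [Finset.mem_Icc]
  constructor <;> intro i <;> simp only [Pi.sub_apply, Pi.add_apply, Pi.one_apply] <;> omega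

lemma mem_littleBox_of_adj {u v : V d} (h : adj u v) : v ∈ Finset.Icc (u - 1) (u + 1) :=
  mem_Icc_of_adj h

/-- The property guaranteed by the selection. -/
def selP (M : Finset (V d)) (c : (V d × V d) × Finset (V d)) : Prop :=
  c.1.1 ∈ M ∧ c.1.2 ∈ M ∧ adj c.1.1 c.1.2 ∧ c.2 ⊆ M ∧
  (∀ z ∈ c.2, (z ≠ c.1.1 ∧ ¬ adj z c.1.1) ∧ (z ≠ c.1.2 ∧ ¬ adj z c.1.2)) ∧
  (∀ z ∈ c.2, ∀ z' ∈ c.2, z ≠ z' → ¬ adj z z') ∧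
  (∀ v ∈ M, v ∈ (insert c.1.1 (insert c.1.2 c.2)).biUnion (fun u => Finset.Icc (u - 1) (u + 1)))

lemma exists_sel (M : Finset (V d)) (h : ∃ x ∈ M, ∃ y ∈ M, adj x y) : ∃ c, selP M c := by
  classical
  obtain ⟨x, hx, y, hy, hxy⟩ := h
  set 𝒯 : Finset (Finset (V d)) := M.powerset.filter (fun T =>
    (∀ z ∈ T, (z ≠ x ∧ ¬ adj z x ∧ ¬ adj x z) ∧ (z ≠ y ∧ ¬ adj z y ∧ ¬ adj y z)) ∧
    ∀ z ∈ T, ∀ z' ∈ T, z ≠ z' → ¬ adj z z') with h𝒯def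
  have h𝒯 : 𝒯.Nonempty := ⟨∅, by simp [h𝒯def]⟩
  obtain ⟨T, hT𝒯, hTmax⟩ := 𝒯.exists_max_image Finset.card h𝒯
  rw [h𝒯def, Finset.mem_filter, Finset.mem_powerset] at hT𝒯
  obtain ⟨hTM, hTsep, hTT⟩ := hT𝒯
  refine ⟨((x, y), T), hx, hy, hxy, hTM,
    fun z hz => ⟨⟨(hTsep z hz).1.1, (hTsep z hz).1.2.1⟩, ⟨(hTsep z hz).2.1, (hTsep z hz).2.2.1⟩⟩,
    hTT, ?_⟩
  intro v hv
  simp only [Finset.mem_biUnion, Finset.mem_insert]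
  by_cases hvx : v = x
  · exact ⟨x, Or.inl rfl, hvx ▸ self_mem_littleBox x⟩
  by_cases hvy : v = y
  · exact ⟨y, Or.inr (Or.inl rfl), hvy ▸ self_mem_littleBox y⟩
  by_cases hvT : v ∈ T
  · exact ⟨v, Or.inr (Or.inr hvT), self_mem_littleBox v⟩
  by_cases h1 : adj x v
  · exact ⟨x, Or.inl rfl, mem_littleBox_of_adj h1⟩
  by_cases h2 : adj v x
  · exact ⟨x, Or.inl rfl, mem_littleBox_of_adj (adj_comm.mp h2)⟩
  by_cases h3 : adj y v
  · exact ⟨y, Or.inr (Or.inl rfl), mem_littleBox_of_adj h3⟩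
  by_cases h4 : adj v y
  · exact ⟨y, Or.inr (Or.inl rfl), mem_littleBox_of_adj (adj_comm.mp h4)⟩
  by_cases h5 : ∃ z' ∈ T, adj z' v ∨ adj v z'
  · obtain ⟨z', hz', h'⟩ := h5
    exact ⟨z', Or.inr (Or.inr hz'), mem_littleBox_of_adj (h'.elim id (fun hh => adj_comm.mp hh))⟩
  -- otherwise, T ∪ {v} would be admissible, contradicting maximality of T
  exfalso
  push_neg at h5
  have hmem : insert v T ∈ 𝒯 := by
    rw [h𝒯def, Finset.mem_filter, Finset.mem_powerset]
    refine ⟨Finset.insert_subset hv hTM, fun z hz => ?_, fun z hz z' hz' hne => ?_⟩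
    · rcases Finset.mem_insert.mp hz with rfl | hz
      · exact ⟨⟨hvx, h2, h1⟩, ⟨hvy, h4, h3⟩⟩
      · exact hTsep z hz
    · rcases Finset.mem_insert.mp hz with hzv | hzT
      · rcases Finset.mem_insert.mp hz' with hz'v | hz'T
        · exact absurd (hzv.trans hz'v.symm) hne
        · subst hzv
          exact (h5 z' hz'T).2
      · rcases Finset.mem_insert.mp hz' with hz'v | hz'T
        · subst hz'v
          exact (h5 z hzT).1
        · exact hTT z hzT z' hz'T hne
  have := hTmax _ hmem
  rw [Finset.card_insert_of_notMem hvT] at this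
  omega

open scoped Classical in
noncomputable def sel (M : Finset (V d)) : (V d × V d) × Finset (V d) :=
  if h : ∃ x ∈ M, ∃ y ∈ M, adj x y then (exists_sel M h).choose else ((0, 0), ∅)

lemma sel_spec (M : Finset (V d)) (h : ∃ x ∈ M, ∃ y ∈ M, adj x y) : selP M (sel M) := by
  classical
  rw [sel, dif_pos h]
  exact (exists_sel M h).choose_spec

end ClusterAux


namespace ClusterAux

variable {d : ℕ}

lemma card_littleBox (u : V d) : (Finset.Icc (u - 1) (u + 1)).card = 3 ^ d := by
  rw [Pi.card_Icc]
  have : ∀ i : Fin d, (Finset.Icc ((u - 1) i) ((u + 1) i)).card = 3 := by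
    intro i
    rw [Int.card_Icc]
    simp only [Pi.sub_apply, Pi.add_apply, Pi.one_apply]
    omega
  rw [Finset.prod_congr rfl (fun i _ => this i)]
  simp

lemma card_cover_le (m : ℕ) (c : (V d × V d) × Finset (V d)) (hc : c.2.card ≤ m) :
    ((insert c.1.1 (insert c.1.2 c.2)).biUnion
      (fun u => Finset.Icc (u - 1) (u + 1))).card ≤ (m + 2) * 3 ^ d := by
  classical
  refine le_trans (Finset.card_biUnion_le) ?_
  rw [Finset.sum_congr rfl (fun u _ => card_littleBox u), Finset.sum_const, smul_eq_mul]
  have hcard : (insert c.1.1 (insert c.1.2 c.2)).card ≤ m + 2 := by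
    refine le_trans (Finset.card_insert_le _ _) ?_
    have := Finset.card_insert_le c.1.2 c.2
    omega
  exact Nat.mul_le_mul_right _ hcard

lemma card_pairs_le (n : ℕ) :
    (((box d n) ×ˢ (box d n)).filter (fun pr => adj pr.1 pr.2)).card
      ≤ (box d n).card * (2 * d) := by
  classical
  have hsub : ((box d n) ×ˢ (box d n)).filter (fun pr => adj pr.1 pr.2)
      ⊆ (box d n).biUnion (fun x => {x} ×ˢ nbrs x) := by
    intro pr hpr
    obtain ⟨hmem, hadj⟩ := Finset.mem_filter.mp hpr
    obtain ⟨h1, h2⟩ := Finset.mem_product.mp hmem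
    refine Finset.mem_biUnion.mpr ⟨pr.1, h1, Finset.mem_product.mpr ⟨Finset.mem_singleton_self _, ?_⟩⟩
    rw [nbrs, Finset.mem_filter]
    exact ⟨mem_Icc_of_adj hadj, hadj⟩
  refine le_trans (Finset.card_le_card hsub) (le_trans Finset.card_biUnion_le ?_)
  have : ∀ x : V d, ({x} ×ˢ nbrs x).card ≤ 2 * d := by
    intro x
    rw [Finset.card_product, Finset.card_singleton, one_mul]
    exact card_nbrs_le x
  refine le_trans (Finset.sum_le_sum (fun x _ => this x)) ?_
  rw [Finset.sum_const, smul_eq_mul]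

lemma powerset_filter_card_eq (s : Finset (V d)) (m : ℕ) :
    s.powerset.filter (fun T => T.card ≤ m)
      = (Finset.range (m + 1)).biUnion (fun j => Finset.powersetCard j s) := by
  classical
  ext T
  simp only [Finset.mem_filter, Finset.mem_powerset, Finset.mem_biUnion, Finset.mem_range,
    Finset.mem_powersetCard, Nat.lt_succ_iff]
  constructor
  · rintro ⟨h1, h2⟩
    exact ⟨T.card, h2, h1, rfl⟩
  · rintro ⟨j, hj, h1, rfl⟩
    exact ⟨h1, hj⟩

end ClusterAux


open ClusterAux

/-- the total probability of configurations with at least one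
non-singleton connected component vanishes, uniformly over the removed set `A`. -/
theorem cluster_probability_vanishes {d : ℕ} (hd : 2 ≤ d) {Ω : Type*}
    [MeasurableSpace Ω] (P : Measure Ω) [IsProbabilityMeasure P]
    (w : Ω → V d → V d → ℝ) (F : ℝ → ℝ)
    (hiid : IIDConductances P w F)
    (k l : ℕ) (hk : 1 ≤ k) (γ : ℝ) (hγ : 0 < γ)
    (a : ℕ → ℝ) (ha : ∀ n, 0 < a n) (e₁ : V d) (he₁ : adj 0 e₁)
    (hlim1 : ∀ ζ : ℝ, 0 ≤ ζ → Tendsto (fun n : ℕ =>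
        ((box d n).card : ℝ) * (P {ω | speed (w ω) 0 ≤ a n * ζ}).toReal)
      atTop (nhds (ζ ^ (2 * (d : ℝ) * γ))))
    (hlim2 : ∀ ζ : ℝ, 0 ≤ ζ → Tendsto (fun n : ℕ =>
        ((box d n).card : ℝ) *
          (P {ω | speed (w ω) 0 ≤ a n * ζ ∧ speed (w ω) e₁ ≤ a n * ζ}).toReal)
      atTop (nhds 0)) :
    ∀ ζ : ℝ, 0 ≤ ζ →
      Tendsto (fun n : ℕ => sSup ((fun A : Finset (V d) =>
          ∑ m ∈ Finset.Icc 1 l, ∑ q ∈ Finset.Icc 1 (m - 1),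
            ∑ M ∈ (Finset.powersetCard m (box d n \ closNbr A)).filter
                (fun M => ncc M = q),
              (P {ω | ∀ x ∈ M, speed (w ω) x ≤ a n * ζ}).toReal) ''
        {A : Finset (V d) | A ⊆ box d n ∧ A.card = k - 1}))
      atTop (nhds 0) := by
  intro ζ hζ
  classical
  obtain ⟨hsymW, _hposW, hmeasW, hindW, hFW⟩ := hiid
  have hd0 : 0 < d := by omega
  set p1 : ℕ → ℝ := fun n => (P {ω | speed (w ω) 0 ≤ a n * ζ}).toReal with hp1d
  set p2 : ℕ → ℝ := fun n =>
    (P {ω | speed (w ω) 0 ≤ a n * ζ ∧ speed (w ω) e₁ ≤ a n * ζ}).toReal with hp2d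
  have hp1nn : ∀ n, 0 ≤ p1 n := fun n => ENNReal.toReal_nonneg
  have hp2nn : ∀ n, 0 ≤ p2 n := fun n => ENNReal.toReal_nonneg
  -- Step 1: the per-configuration probability bound
  have hM : ∀ (n : ℕ) (M : Finset (V d)), (∃ x ∈ M, ∃ y ∈ M, adj x y) →
      (P {ω | ∀ z ∈ M, speed (w ω) z ≤ a n * ζ}).toReal
        ≤ p2 n * p1 n ^ (sel M).2.card := by
    intro n M hpair
    obtain ⟨hx, hy, hxy, hTM, hsep, hTT, -⟩ := sel_spec M hpair
    have hsub : {ω | ∀ z ∈ M, speed (w ω) z ≤ a n * ζ}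
        ⊆ ({ω | speed (w ω) (sel M).1.1 ≤ a n * ζ
              ∧ speed (w ω) (sel M).1.2 ≤ a n * ζ}
            ∩ ⋂ z ∈ (((sel M).2 : Finset (V d)) : Set (V d)),
                {ω | speed (w ω) z ≤ a n * ζ}) := by
      intro ω hω
      exact ⟨⟨hω _ hx, hω _ hy⟩, Set.mem_iInter₂.mpr fun z hz => hω z (hTM hz)⟩
    have h1 := measure_mono (μ := P) hsub
    rw [indep_prod hsymW hmeasW hindW _ _ _ _
      (fun z hz => (hsep z hz).1) (fun z hz => (hsep z hz).2) hTT] at h1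
    rw [pair_prob_adj hsymW hmeasW hindW hFW hxy he₁ (a n * ζ)] at h1
    rw [Finset.prod_congr rfl (fun z _ =>
      single_prob_eq hsymW hmeasW hindW hFW hd0 z 0 (a n * ζ))] at h1
    rw [Finset.prod_const] at h1
    have hne : P {ω | speed (w ω) 0 ≤ a n * ζ ∧ speed (w ω) e₁ ≤ a n * ζ}
        * P {ω | speed (w ω) 0 ≤ a n * ζ} ^ (sel M).2.card ≠ ⊤ :=
      ENNReal.mul_ne_top (measure_ne_top _ _) (ENNReal.pow_ne_top (measure_ne_top _ _))
    have h2 := ENNReal.toReal_mono hne h1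
    rwa [ENNReal.toReal_mul, ENNReal.toReal_pow] at h2
  -- Step 2: the counting bound, uniform in `A`
  have hcount : ∀ (n m q : ℕ), 1 ≤ m → q ≤ m - 1 → ∀ A : Finset (V d),
      (∑ M ∈ (Finset.powersetCard m (box d n \ closNbr A)).filter (fun M => ncc M = q),
        (P {ω | ∀ z ∈ M, speed (w ω) z ≤ a n * ζ}).toReal)
      ≤ (2 ^ ((m + 2) * 3 ^ d) : ℝ)
          * ((((box d n).card : ℝ) * (2 * d)) * (p2 n * ∑ j ∈ Finset.range (m + 1),
              (((box d n).card : ℝ) * p1 n) ^ j)) := by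
    intro n m q hm hq A
    set 𝓜 := (Finset.powersetCard m (box d n)).filter
      (fun M => ∃ x ∈ M, ∃ y ∈ M, adj x y) with h𝓜
    have hstep1 : (∑ M ∈ (Finset.powersetCard m (box d n \ closNbr A)).filter
          (fun M => ncc M = q),
          (P {ω | ∀ z ∈ M, speed (w ω) z ≤ a n * ζ}).toReal)
        ≤ ∑ M ∈ 𝓜, (P {ω | ∀ z ∈ M, speed (w ω) z ≤ a n * ζ}).toReal := by
      refine Finset.sum_le_sum_of_subset_of_nonneg ?_ (fun _ _ _ => ENNReal.toReal_nonneg)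
      intro M hMm
      obtain ⟨hMp, hMncc⟩ := Finset.mem_filter.mp hMm
      obtain ⟨hMsub, hMcard⟩ := Finset.mem_powersetCard.mp hMp
      refine Finset.mem_filter.mpr ⟨Finset.mem_powersetCard.mpr
        ⟨hMsub.trans Finset.sdiff_subset, hMcard⟩, ?_⟩
      by_contra hno
      push_neg at hno
      have := ncc_eq_card_of_no_adj M hno
      omega
    have hstep2 : ∑ M ∈ 𝓜, (P {ω | ∀ z ∈ M, speed (w ω) z ≤ a n * ζ}).toReal
        ≤ ∑ M ∈ 𝓜, (p2 n * p1 n ^ (sel M).2.card) :=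
      Finset.sum_le_sum (fun M hMm => hM n M (Finset.mem_filter.mp hMm).2)
    set D := (((box d n) ×ˢ (box d n)).filter (fun pr => adj pr.1 pr.2))
      ×ˢ ((box d n).powerset.filter (fun T => T.card ≤ m)) with hD
    have himg : 𝓜.image sel ⊆ D := by
      intro c hc
      obtain ⟨M, hMm, rfl⟩ := Finset.mem_image.mp hc
      obtain ⟨hMp, hMpair⟩ := Finset.mem_filter.mp hMm
      obtain ⟨hMsub, hMcard⟩ := Finset.mem_powersetCard.mp hMp
      obtain ⟨hx, hy, hxy, hTM, -, -, -⟩ := sel_spec M hMpair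
      exact Finset.mem_product.mpr ⟨Finset.mem_filter.mpr
        ⟨Finset.mem_product.mpr ⟨hMsub hx, hMsub hy⟩, hxy⟩,
        Finset.mem_filter.mpr ⟨Finset.mem_powerset.mpr (hTM.trans hMsub),
          (Finset.card_le_card hTM).trans (le_of_eq hMcard)⟩⟩
    have hfiber : ∀ c ∈ 𝓜.image sel,
        (𝓜.filter (fun M => sel M = c)).card ≤ 2 ^ ((m + 2) * 3 ^ d) := by
      intro c hc
      obtain ⟨M₀, hM₀, hM₀c⟩ := Finset.mem_image.mp hc
      obtain ⟨hM₀p, hM₀pair⟩ := Finset.mem_filter.mp hM₀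
      obtain ⟨hM₀sub, hM₀card⟩ := Finset.mem_powersetCard.mp hM₀p
      have hcardc : c.2.card ≤ m := by
        obtain ⟨-, -, -, hTM, -, -, -⟩ := sel_spec M₀ hM₀pair
        rw [← hM₀c]
        exact (Finset.card_le_card hTM).trans (le_of_eq hM₀card)
      have hsubfib : 𝓜.filter (fun M => sel M = c)
          ⊆ ((insert c.1.1 (insert c.1.2 c.2)).biUnion
              (fun u => Finset.Icc (u - 1) (u + 1))).powerset := by
        intro M hMf
        obtain ⟨hMm, hMc⟩ := Finset.mem_filter.mp hMf
        obtain ⟨-, -, -, -, -, -, hcov⟩ := sel_spec M (Finset.mem_filter.mp hMm).2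
        rw [hMc] at hcov
        exact Finset.mem_powerset.mpr (fun v hv => hcov v hv)
      calc (𝓜.filter (fun M => sel M = c)).card
          ≤ _ := Finset.card_le_card hsubfib
        _ = 2 ^ ((insert c.1.1 (insert c.1.2 c.2)).biUnion
              (fun u => Finset.Icc (u - 1) (u + 1))).card := Finset.card_powerset _
        _ ≤ 2 ^ ((m + 2) * 3 ^ d) :=
            Nat.pow_le_pow_right (by norm_num) (card_cover_le m c hcardc)
    have hstep3 : ∑ M ∈ 𝓜, (p2 n * p1 n ^ (sel M).2.card)
        ≤ ∑ c ∈ D, (2 ^ ((m + 2) * 3 ^ d) : ℝ) * (p2 n * p1 n ^ c.2.card) := by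
      rw [Finset.sum_comp (fun c : (V d × V d) × Finset (V d) => p2 n * p1 n ^ c.2.card) sel]
      refine le_trans (Finset.sum_le_sum (fun c hc => ?_))
        (Finset.sum_le_sum_of_subset_of_nonneg himg (fun c _ _ =>
          mul_nonneg (by positivity) (mul_nonneg (hp2nn n) (pow_nonneg (hp1nn n) _))))
      rw [nsmul_eq_mul]
      refine mul_le_mul_of_nonneg_right ?_ (mul_nonneg (hp2nn n) (pow_nonneg (hp1nn n) _))
      calc ((𝓜.filter (fun M => sel M = c)).card : ℝ)
          ≤ ((2 ^ ((m + 2) * 3 ^ d) : ℕ) : ℝ) := Nat.cast_le.mpr (hfiber c hc)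
        _ = (2 : ℝ) ^ ((m + 2) * 3 ^ d) := by push_cast; ring
    have hTsum : ∑ T ∈ (box d n).powerset.filter (fun T => T.card ≤ m), p1 n ^ T.card
        ≤ ∑ j ∈ Finset.range (m + 1), (((box d n).card : ℝ) * p1 n) ^ j := by
      have hdisj : (↑(Finset.range (m + 1)) : Set ℕ).PairwiseDisjoint
          (fun j => Finset.powersetCard j (box d n)) := by
        intro j _ j' _ hne
        refine Finset.disjoint_left.mpr (fun T hT hT' => hne ?_)
        rw [← (Finset.mem_powersetCard.mp hT).2, ← (Finset.mem_powersetCard.mp hT').2]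
      rw [powerset_filter_card_eq (box d n) m, Finset.sum_biUnion hdisj]
      refine Finset.sum_le_sum (fun j _ => ?_)
      rw [Finset.sum_congr rfl (fun T hT => by rw [(Finset.mem_powersetCard.mp hT).2]),
        Finset.sum_const, Finset.card_powersetCard, nsmul_eq_mul, mul_pow]
      refine mul_le_mul_of_nonneg_right ?_ (pow_nonneg (hp1nn n) _)
      calc (((box d n).card.choose j : ℕ) : ℝ)
          ≤ (((box d n).card ^ j : ℕ) : ℝ) := Nat.cast_le.mpr (Nat.choose_le_pow _ _)
        _ = ((box d n).card : ℝ) ^ j := by push_cast; ring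
    have hstep4 : ∑ c ∈ D, (2 ^ ((m + 2) * 3 ^ d) : ℝ) * (p2 n * p1 n ^ c.2.card)
        ≤ (2 ^ ((m + 2) * 3 ^ d) : ℝ)
            * ((((box d n).card : ℝ) * (2 * d)) * (p2 n * ∑ j ∈ Finset.range (m + 1),
                (((box d n).card : ℝ) * p1 n) ^ j)) := by
      rw [← Finset.mul_sum]
      refine mul_le_mul_of_nonneg_left ?_ (by positivity)
      rw [hD, Finset.sum_product]
      have hinner : ∀ pr : V d × V d,
          ∑ T ∈ (box d n).powerset.filter (fun T => T.card ≤ m), p2 n * p1 n ^ T.card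
            = p2 n * ∑ T ∈ (box d n).powerset.filter (fun T => T.card ≤ m), p1 n ^ T.card :=
        fun _ => (Finset.mul_sum _ _ _).symm
      rw [Finset.sum_congr rfl (fun pr _ => hinner pr), Finset.sum_const, nsmul_eq_mul]
      have hTnn : 0 ≤ ∑ T ∈ (box d n).powerset.filter (fun T => T.card ≤ m), p1 n ^ T.card :=
        Finset.sum_nonneg (fun T _ => pow_nonneg (hp1nn n) _)
      refine mul_le_mul ?_ (mul_le_mul_of_nonneg_left hTsum (hp2nn n))
        (mul_nonneg (hp2nn n) hTnn) (by positivity)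
      calc (((((box d n) ×ˢ (box d n)).filter (fun pr => adj pr.1 pr.2)).card : ℕ) : ℝ)
          ≤ (((box d n).card * (2 * d) : ℕ) : ℝ) := Nat.cast_le.mpr (card_pairs_le n)
        _ = ((box d n).card : ℝ) * (2 * d) := by push_cast; ring
    exact le_trans hstep1 (le_trans hstep2 (le_trans hstep3 hstep4))
  -- Step 3: the uniform bound sequence and its limit
  set Bnd : ℕ → ℝ := fun n => ∑ m ∈ Finset.Icc 1 l, ∑ q ∈ Finset.Icc 1 (m - 1),
      (2 ^ ((m + 2) * 3 ^ d) : ℝ)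
        * ((((box d n).card : ℝ) * (2 * d)) * (p2 n * ∑ j ∈ Finset.range (m + 1),
            (((box d n).card : ℝ) * p1 n) ^ j)) with hBnd
  have hBndnn : ∀ n, 0 ≤ Bnd n := by
    intro n
    refine Finset.sum_nonneg (fun m _ => Finset.sum_nonneg (fun q _ => ?_))
    have h1 : (0:ℝ) ≤ ∑ j ∈ Finset.range (m + 1), (((box d n).card : ℝ) * p1 n) ^ j :=
      Finset.sum_nonneg (fun j _ => pow_nonneg (mul_nonneg (Nat.cast_nonneg _) (hp1nn n)) _)
    have h2 : (0:ℝ) ≤ ((box d n).card : ℝ) * (2 * d) := by positivity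
    exact mul_nonneg (by positivity) (mul_nonneg h2 (mul_nonneg (hp2nn n) h1))
  have hub : ∀ n, ∀ r ∈ ((fun A : Finset (V d) =>
      ∑ m ∈ Finset.Icc 1 l, ∑ q ∈ Finset.Icc 1 (m - 1),
        ∑ M ∈ (Finset.powersetCard m (box d n \ closNbr A)).filter
            (fun M => ncc M = q),
          (P {ω | ∀ x ∈ M, speed (w ω) x ≤ a n * ζ}).toReal) ''
      {A : Finset (V d) | A ⊆ box d n ∧ A.card = k - 1}), r ≤ Bnd n := by
    rintro n r ⟨A, -, rfl⟩
    refine Finset.sum_le_sum (fun m hm => Finset.sum_le_sum (fun q hq => ?_))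
    exact hcount n m q (Finset.mem_Icc.mp hm).1 (Finset.mem_Icc.mp hq).2 A
  have hnn : ∀ n, ∀ r ∈ ((fun A : Finset (V d) =>
      ∑ m ∈ Finset.Icc 1 l, ∑ q ∈ Finset.Icc 1 (m - 1),
        ∑ M ∈ (Finset.powersetCard m (box d n \ closNbr A)).filter
            (fun M => ncc M = q),
          (P {ω | ∀ x ∈ M, speed (w ω) x ≤ a n * ζ}).toReal) ''
      {A : Finset (V d) | A ⊆ box d n ∧ A.card = k - 1}), 0 ≤ r := by
    rintro n r ⟨A, -, rfl⟩
    exact Finset.sum_nonneg (fun m _ => Finset.sum_nonneg (fun q _ =>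
      Finset.sum_nonneg (fun M _ => ENNReal.toReal_nonneg)))
  have hb1 : Tendsto (fun n => ((box d n).card : ℝ) * p1 n) atTop
      (nhds (ζ ^ (2 * (d : ℝ) * γ))) := hlim1 ζ hζ
  have hb2 : Tendsto (fun n => ((box d n).card : ℝ) * p2 n) atTop (nhds 0) := hlim2 ζ hζ
  have hterm : ∀ m : ℕ, Tendsto (fun n => (2 ^ ((m + 2) * 3 ^ d) : ℝ)
      * ((((box d n).card : ℝ) * (2 * d)) * (p2 n * ∑ j ∈ Finset.range (m + 1),
          (((box d n).card : ℝ) * p1 n) ^ j))) atTop (nhds 0) := by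
    intro m
    have hS : Tendsto (fun n => ∑ j ∈ Finset.range (m + 1),
        (((box d n).card : ℝ) * p1 n) ^ j) atTop
        (nhds (∑ j ∈ Finset.range (m + 1), (ζ ^ (2 * (d : ℝ) * γ)) ^ j)) :=
      tendsto_finset_sum _ (fun j _ => hb1.pow j)
    have heq : (fun n => (2 ^ ((m + 2) * 3 ^ d) : ℝ)
        * ((((box d n).card : ℝ) * (2 * d)) * (p2 n * ∑ j ∈ Finset.range (m + 1),
            (((box d n).card : ℝ) * p1 n) ^ j)))
        = fun n => ((2 ^ ((m + 2) * 3 ^ d) : ℝ) * (2 * d))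
            * ((((box d n).card : ℝ) * p2 n) * ∑ j ∈ Finset.range (m + 1),
                (((box d n).card : ℝ) * p1 n) ^ j) := by
      funext n
      ring
    rw [heq]
    have := (hb2.mul hS).const_mul ((2 ^ ((m + 2) * 3 ^ d) : ℝ) * (2 * d))
    simpa using this
  have hBndlim : Tendsto Bnd atTop (nhds 0) := by
    rw [hBnd]
    have := tendsto_finset_sum (Finset.Icc 1 l) (fun m (_ : m ∈ Finset.Icc 1 l) =>
      tendsto_finset_sum (Finset.Icc 1 (m - 1))
        (fun q (_ : q ∈ Finset.Icc 1 (m - 1)) => hterm m))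
    simpa using this
  refine tendsto_of_tendsto_of_tendsto_of_le_of_le tendsto_const_nhds hBndlim
    (fun n => Real.sSup_nonneg (hnn n)) (fun n => Real.sSup_le (hub n) (hBndnn n))
end
end

section
/- Assume the conductances are i.i.d. with continuous distribution function F varying regularly at zero with index γ > 0, and set a_n = 1/h(|B_n|). Then for every ζ ≥ 0: lim_{n→∞} |B_n| · ℙ[π_0 ≤ a_n ζ] = ζ^{2dγ}. -/
open MeasureTheory ProbabilityTheory Filter

noncomputable section

/-- `h(u) = inf {s > 0 : 1/F_π(1/s) = u}`. -/
def hfun (Fp : ℝ → ℝ) (u : ℝ) : ℝ := sInf {s : ℝ | 0 < s ∧ 1 / Fp (1 / s) = u}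

set_option linter.unusedSectionVars false
set_option linter.unusedVariables false

namespace SpeedTail

variable {Ω : Type*} [MeasurableSpace Ω] (P : Measure Ω) [IsProbabilityMeasure P]

/-- cdf of a real random variable as a real function. -/
def cdf' (Z : Ω → ℝ) (t : ℝ) : ℝ := (P {ω | Z ω ≤ t}).toReal

variable {Z : Ω → ℝ}

lemma cdf'_nonneg (t : ℝ) : 0 ≤ cdf' P Z t := ENNReal.toReal_nonneg

lemma cdf'_le_one (t : ℝ) : cdf' P Z t ≤ 1 := by
  have h := measure_mono (μ := P) (Set.subset_univ {ω | Z ω ≤ t})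
  rw [measure_univ] at h
  simpa [cdf'] using ENNReal.toReal_mono (by simp) h

lemma cdf'_mono : Monotone (cdf' P Z) := by
  intro s t hst
  exact ENNReal.toReal_mono (measure_ne_top _ _)
    (measure_mono (fun ω h => le_trans h hst))

lemma cdf'_of_nonpos (hZ : ∀ ω, 0 < Z ω) {t : ℝ} (ht : t ≤ 0) : cdf' P Z t = 0 := by
  have : {ω | Z ω ≤ t} = (∅ : Set Ω) := by
    ext ω; simp only [Set.mem_setOf_eq, Set.mem_empty_iff_false, iff_false]
    exact fun h => absurd (le_trans h ht) (not_le.2 (hZ ω))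
  simp [cdf', this]

lemma cdf'_Ioc (hZ : Measurable Z) {a b : ℝ} (hab : a ≤ b) :
    (P {ω | a < Z ω ∧ Z ω ≤ b}).toReal = cdf' P Z b - cdf' P Z a := by
  have hsplit : {ω | Z ω ≤ b} = {ω | Z ω ≤ a} ∪ {ω | a < Z ω ∧ Z ω ≤ b} := by
    ext ω; simp only [Set.mem_setOf_eq, Set.mem_union]
    constructor
    · intro h; rcases le_or_gt (Z ω) a with h' | h'
      · exact Or.inl h'
      · exact Or.inr ⟨h', h⟩
    · rintro (h | ⟨_, h⟩); exacts [le_trans h hab, h]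
  have hdisj : Disjoint {ω | Z ω ≤ a} {ω | a < Z ω ∧ Z ω ≤ b} := by
    rw [Set.disjoint_left]; rintro ω h ⟨h1, _⟩; exact absurd h (not_le.2 h1)
  have hm1 : MeasurableSet {ω | Z ω ≤ a} := hZ measurableSet_Iic
  have hm2 : MeasurableSet {ω | a < Z ω ∧ Z ω ≤ b} := by
    have : {ω | a < Z ω ∧ Z ω ≤ b} = Z ⁻¹' (Set.Ioc a b) := rfl
    rw [this]; exact hZ measurableSet_Ioc
  have := measure_union (μ := P) hdisj hm2
  rw [← hsplit] at this
  rw [cdf', cdf', this, ENNReal.toReal_add (measure_ne_top _ _) (measure_ne_top _ _)]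
  ring

lemma cdf'_atom_zero (hZ : Measurable Z) (hcont : Continuous (cdf' P Z)) (c : ℝ) :
    P {ω | Z ω = c} = 0 := by
  have key : ∀ n : ℕ, (P {ω | Z ω = c}).toReal ≤
      cdf' P Z c - cdf' P Z (c - 1/(n+1)) := by
    intro n
    have hsub : {ω | Z ω = c} ⊆ {ω | c - 1/(n+1) < Z ω ∧ Z ω ≤ c} := by
      intro ω h
      simp only [Set.mem_setOf_eq] at h ⊢
      constructor
      · rw [h]; have : (0:ℝ) < 1/(n+1) := by positivity
        linarith
      · exact le_of_eq h
    calc (P {ω | Z ω = c}).toReal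
        ≤ (P {ω | c - 1/(n+1) < Z ω ∧ Z ω ≤ c}).toReal :=
          ENNReal.toReal_mono (measure_ne_top _ _) (measure_mono hsub)
      _ = cdf' P Z c - cdf' P Z (c - 1/(n+1)) := by
          apply cdf'_Ioc P hZ
          have : (0:ℝ) < 1/(n+1) := by positivity
          linarith
  have hlim : Tendsto (fun n : ℕ => cdf' P Z c - cdf' P Z (c - 1/(n+1))) atTop (nhds 0) := by
    have h1 : Tendsto (fun n : ℕ => c - 1/(n+1 : ℝ)) atTop (nhds c) := by
      have := tendsto_one_div_add_atTop_nhds_zero_nat (𝕜 := ℝ)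
      have := (tendsto_const_nhds (x := c) (f := atTop (α := ℕ))).sub this
      simpa using this
    have h2 := (hcont.tendsto c).comp h1
    have := (tendsto_const_nhds (x := cdf' P Z c) (f := atTop (α := ℕ))).sub h2
    simpa using this
  have hle : (P {ω | Z ω = c}).toReal ≤ 0 := ge_of_tendsto hlim (Eventually.of_forall key)
  have h0 : (P {ω | Z ω = c}).toReal = 0 := le_antisymm hle ENNReal.toReal_nonneg
  exact (ENNReal.toReal_eq_zero_iff _).1 h0 |>.resolve_right (measure_ne_top _ _)

lemma continuous_cdf'_of_atomless (hZ : Measurable Z)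
    (h : ∀ c : ℝ, P {ω | Z ω = c} = 0) : Continuous (cdf' P Z) := by
  rw [continuous_iff_continuousAt]
  intro t
  rw [Metric.continuousAt_iff]
  intro ε hε
  -- right limit
  have hright : Tendsto (fun n : ℕ => cdf' P Z (t + 1/(n+1))) atTop (nhds (cdf' P Z t)) := by
    have hmono : Antitone (fun n : ℕ => {ω | Z ω ≤ t + 1/(n+1)}) := by
      intro m n hmn
      intro ω hω
      simp only [Set.mem_setOf_eq] at hω ⊢
      have : (1:ℝ)/(n+1) ≤ 1/(m+1) := by
        apply one_div_le_one_div_of_le (by positivity)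
        exact_mod_cast Nat.succ_le_succ hmn
      linarith
    have hInter : (⋂ n : ℕ, {ω | Z ω ≤ t + 1/(n+1)}) = {ω | Z ω ≤ t} := by
      ext ω
      simp only [Set.mem_iInter, Set.mem_setOf_eq]
      constructor
      · intro hω
        by_contra hc
        push_neg at hc
        obtain ⟨n, hn⟩ := exists_nat_one_div_lt (sub_pos.2 hc)
        have := hω n
        linarith [hn]
      · intro hω n
        have : (0:ℝ) < 1/(n+1) := by positivity
        linarith
    have := MeasureTheory.tendsto_measure_iInter_atTop
      (μ := P) (s := fun n : ℕ => {ω | Z ω ≤ t + 1/(n+1)})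
      (fun n => (hZ measurableSet_Iic).nullMeasurableSet) hmono ⟨0, measure_ne_top _ _⟩
    rw [hInter] at this
    have := (ENNReal.tendsto_toReal (measure_ne_top P _)).comp this
    exact this
  -- left limit
  have hleft : Tendsto (fun n : ℕ => cdf' P Z (t - 1/(n+1))) atTop (nhds (cdf' P Z t)) := by
    have hmono : Monotone (fun n : ℕ => {ω | Z ω ≤ t - 1/(n+1)}) := by
      intro m n hmn ω hω
      simp only [Set.mem_setOf_eq] at hω ⊢
      have : (1:ℝ)/(n+1) ≤ 1/(m+1) := by
        apply one_div_le_one_div_of_le (by positivity)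
        exact_mod_cast Nat.succ_le_succ hmn
      linarith
    have hUnion : (⋃ n : ℕ, {ω | Z ω ≤ t - 1/(n+1)}) = {ω | Z ω < t} := by
      ext ω
      simp only [Set.mem_iUnion, Set.mem_setOf_eq]
      constructor
      · rintro ⟨n, hn⟩
        have : (0:ℝ) < 1/(n+1) := by positivity
        linarith
      · intro hω
        obtain ⟨n, hn⟩ := exists_nat_one_div_lt (sub_pos.2 hω)
        exact ⟨n, by linarith [hn]⟩
    have h1 := MeasureTheory.tendsto_measure_iUnion_atTop
      (μ := P) (s := fun n : ℕ => {ω | Z ω ≤ t - 1/(n+1)}) hmono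
    rw [hUnion] at h1
    have heq : P {ω | Z ω < t} = P {ω | Z ω ≤ t} := by
      have hsplit : {ω | Z ω ≤ t} = {ω | Z ω < t} ∪ {ω | Z ω = t} := by
        ext ω; simp only [Set.mem_setOf_eq, Set.mem_union]
        exact le_iff_lt_or_eq
      rw [hsplit]
      apply le_antisymm
      · exact measure_mono Set.subset_union_left
      · calc P ({ω | Z ω < t} ∪ {ω | Z ω = t}) ≤ P {ω | Z ω < t} + P {ω | Z ω = t} :=
            measure_union_le _ _
          _ = P {ω | Z ω < t} := by rw [h t, add_zero]
    rw [heq] at h1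
    have := (ENNReal.tendsto_toReal (measure_ne_top P _)).comp h1
    exact this
  -- combine
  rw [Metric.tendsto_atTop] at hright hleft
  obtain ⟨n1, hn1⟩ := hright ε hε
  obtain ⟨n2, hn2⟩ := hleft ε hε
  have h1 := hn1 n1 le_rfl
  have h2 := hn2 n2 le_rfl
  rw [Real.dist_eq] at h1 h2
  set δ1 := (1:ℝ)/(n1+1) with hδ1
  set δ2 := (1:ℝ)/(n2+1) with hδ2
  have hδ1p : 0 < δ1 := by positivity
  have hδ2p : 0 < δ2 := by positivity
  refine ⟨min δ1 δ2, lt_min hδ1p hδ2p, ?_⟩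
  intro s hs
  rw [Real.dist_eq] at hs ⊢
  have hs1 : s < t + δ1 := by
    have := abs_lt.1 hs
    have := min_le_left δ1 δ2
    linarith [this, (abs_lt.1 hs).2]
  have hs2 : t - δ2 < s := by
    have := (abs_lt.1 hs).1
    have h' := min_le_right δ1 δ2
    linarith
  have hub : cdf' P Z s ≤ cdf' P Z (t + δ1) := cdf'_mono P (le_of_lt hs1)
  have hlb : cdf' P Z (t - δ2) ≤ cdf' P Z s := cdf'_mono P (le_of_lt hs2)
  have e1 : cdf' P Z (t + δ1) - cdf' P Z t < ε := by
    have := abs_lt.1 h1; linarith [this.2]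
  have e2 : cdf' P Z t - cdf' P Z (t - δ2) < ε := by
    have := abs_lt.1 h2; linarith [this.1]
  rw [abs_lt]
  constructor <;> linarith

lemma cdf'_exists_gt (hZ : Measurable Z) {c : ℝ} (hc : c < 1) :
    ∃ t : ℝ, c < cdf' P Z t := by
  have hmono : Monotone (fun n : ℕ => {ω | Z ω ≤ (n:ℝ)}) := by
    intro m n hmn ω hω
    simp only [Set.mem_setOf_eq] at hω ⊢
    exact le_trans hω (by exact_mod_cast hmn)
  have hUnion : (⋃ n : ℕ, {ω | Z ω ≤ (n:ℝ)}) = Set.univ := by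
    ext ω
    simp only [Set.mem_iUnion, Set.mem_setOf_eq, Set.mem_univ, iff_true]
    obtain ⟨n, hn⟩ := exists_nat_ge (Z ω)
    exact ⟨n, hn⟩
  have h1 := MeasureTheory.tendsto_measure_iUnion_atTop
    (μ := P) (s := fun n : ℕ => {ω | Z ω ≤ (n:ℝ)}) hmono
  rw [hUnion, measure_univ] at h1
  have h2 := (ENNReal.tendsto_toReal (by simp : (1:ENNReal) ≠ ⊤)).comp h1
  simp only [ENNReal.toReal_one] at h2
  have := h2.eventually_const_lt hc
  obtain ⟨n, hn⟩ := this.exists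
  exact ⟨n, hn⟩


section Part2

variable {Ω : Type*} [MeasurableSpace Ω] (P : Measure Ω) [IsProbabilityMeasure P]

lemma ratio_tendsto {F : ℝ → ℝ} {α : ℝ} (hα : 0 < α) (hF0 : F 0 = 0)
    (hreg : RegVarZero F α) {c : ℝ} (hc : 0 ≤ c) :
    Tendsto (fun t => F (t * c) / F t) (nhdsWithin 0 (Set.Ioi 0)) (nhds (c ^ (α:ℝ))) := by
  rcases hc.eq_or_lt with h0 | hpos
  · rw [← h0]
    simp only [mul_zero, hF0, zero_div, Real.zero_rpow hα.ne']
    exact tendsto_const_nhds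
  · exact hreg c hpos

lemma conv_atomless {X Y : Ω → ℝ} (hXm : Measurable X) (hYm : Measurable Y)
    (hInd : IndepFun X Y P) (hY0 : ∀ c : ℝ, P {ω | Y ω = c} = 0) (c : ℝ) :
    P {ω | X ω + Y ω = c} = 0 := by
  have hmap : P.map (fun ω => (X ω, Y ω)) = (P.map X).prod (P.map Y) :=
    (indepFun_iff_map_prod_eq_prod_map_map hXm.aemeasurable hYm.aemeasurable).1 hInd
  have hs : MeasurableSet {p : ℝ × ℝ | p.1 + p.2 = c} :=
    (measurable_fst.add measurable_snd) (measurableSet_singleton c)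
  have h1 : {ω | X ω + Y ω = c} = (fun ω => (X ω, Y ω)) ⁻¹' {p : ℝ × ℝ | p.1 + p.2 = c} := rfl
  rw [h1, ← Measure.map_apply (hXm.prodMk hYm) hs, hmap, Measure.prod_apply hs]
  have hzero : ∀ x : ℝ, (P.map Y) (Prod.mk x ⁻¹' {p : ℝ × ℝ | p.1 + p.2 = c}) = 0 := by
    intro x
    have hset : (Prod.mk x ⁻¹' {p : ℝ × ℝ | p.1 + p.2 = c}) = {c - x} := by
      ext y
      simp only [Set.mem_preimage, Set.mem_setOf_eq, Set.mem_singleton_iff]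
      constructor
      · intro h; linarith
      · intro h; rw [h]; ring
    rw [hset, Measure.map_apply hYm (measurableSet_singleton _)]
    exact hY0 (c - x)
  rw [lintegral_congr hzero, lintegral_zero]

set_option maxHeartbeats 1000000 in
theorem conv_regvar {X Y : Ω → ℝ} (hXm : Measurable X) (hYm : Measurable Y)
    (hXp : ∀ ω, 0 < X ω) (hYp : ∀ ω, 0 < Y ω)
    (hInd : IndepFun X Y P) {α β : ℝ} (hα : 0 < α) (hβ : 0 < β)
    (hXr : RegVarZero (cdf' P X) α) (hYr : RegVarZero (cdf' P Y) β)
    (hXpos : ∀ t, 0 < t → 0 < cdf' P X t) (hYpos : ∀ t, 0 < t → 0 < cdf' P Y t) :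
    (∀ t, 0 < t → 0 < cdf' P (fun ω => X ω + Y ω) t) ∧
    RegVarZero (cdf' P (fun ω => X ω + Y ω)) (α + β) := by
  set FX := cdf' P X with hFXdef
  set FY := cdf' P Y with hFYdef
  set Z : Ω → ℝ := fun ω => X ω + Y ω with hZdef
  set FZ := cdf' P Z with hFZdef
  have hZm : Measurable Z := hXm.add hYm
  have hZp : ∀ ω, 0 < Z ω := fun ω => add_pos (hXp ω) (hYp ω)
  have hFX0 : FX 0 = 0 := cdf'_of_nonpos P hXp le_rfl
  have hFY0 : FY 0 = 0 := cdf'_of_nonpos P hYp le_rfl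
  have hFZ0 : FZ 0 = 0 := cdf'_of_nonpos P hZp le_rfl
  -- independence product formula
  have hprod : ∀ s t : Set ℝ, MeasurableSet s → MeasurableSet t →
      (P (X ⁻¹' s ∩ Y ⁻¹' t)).toReal = (P (X ⁻¹' s)).toReal * (P (Y ⁻¹' t)).toReal := by
    intro s t hs ht
    rw [hInd.measure_inter_preimage_eq_mul s t hs ht, ENNReal.toReal_mul]
  -- lower product bound
  have hlow2 : ∀ t : ℝ, FX (t/2) * FY (t/2) ≤ FZ t := by
    intro t
    have hsub : X ⁻¹' Set.Iic (t/2) ∩ Y ⁻¹' Set.Iic (t/2) ⊆ {ω | Z ω ≤ t} := by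
      intro ω ⟨h1, h2⟩
      simp only [Set.mem_preimage, Set.mem_Iic] at h1 h2
      simp only [Set.mem_setOf_eq, hZdef]
      linarith
    have h1 := hprod (Set.Iic (t/2)) (Set.Iic (t/2)) measurableSet_Iic measurableSet_Iic
    have h2 : (P (X ⁻¹' Set.Iic (t/2) ∩ Y ⁻¹' Set.Iic (t/2))).toReal ≤ FZ t :=
      ENNReal.toReal_mono (measure_ne_top _ _) (measure_mono hsub)
    rw [h1] at h2
    exact h2
  have hFZpos : ∀ t, 0 < t → 0 < FZ t := by
    intro t ht
    exact lt_of_lt_of_le (mul_pos (hXpos _ (by linarith)) (hYpos _ (by linarith))) (hlow2 t)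
  refine ⟨hFZpos, ?_⟩
  -- upper product bound
  have hupp2 : ∀ t : ℝ, FZ t ≤ FX t * FY t := by
    intro t
    have hsub : {ω | Z ω ≤ t} ⊆ X ⁻¹' Set.Iic t ∩ Y ⁻¹' Set.Iic t := by
      intro ω hω
      simp only [Set.mem_setOf_eq, hZdef] at hω
      have := hXp ω; have := hYp ω
      exact ⟨by simp only [Set.mem_preimage, Set.mem_Iic]; linarith,
        by simp only [Set.mem_preimage, Set.mem_Iic]; linarith⟩
    have h1 := hprod (Set.Iic t) (Set.Iic t) measurableSet_Iic measurableSet_Iic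
    have h2 : FZ t ≤ (P (X ⁻¹' Set.Iic t ∩ Y ⁻¹' Set.Iic t)).toReal :=
      ENNReal.toReal_mono (measure_ne_top _ _) (measure_mono hsub)
    rw [h1] at h2
    exact h2
  -- Ioc probabilities
  have hIoc : ∀ a b : ℝ, a ≤ b → (P (X ⁻¹' Set.Ioc a b)).toReal = FX b - FX a := by
    intro a b hab
    have h1 : X ⁻¹' Set.Ioc a b = {ω | a < X ω ∧ X ω ≤ b} := rfl
    rw [h1]
    exact cdf'_Ioc P hXm hab
  have hFYIic : ∀ c : ℝ, (P (Y ⁻¹' Set.Iic c)).toReal = FY c := fun c => rfl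
  -- upper sandwich
  have hsandU : ∀ m : ℕ, 0 < m → ∀ t : ℝ, 0 < t →
      FZ t ≤ ∑ k ∈ Finset.range m,
        (FX (t*(((k:ℝ)+1)/(m:ℝ))) - FX (t*((k:ℝ)/(m:ℝ)))) * FY (t*(1 - (k:ℝ)/(m:ℝ))) := by
    intro m hm t ht
    have hmR : (0:ℝ) < m := by exact_mod_cast hm
    set A : ℕ → Set Ω := fun k =>
      X ⁻¹' Set.Ioc (t*((k:ℝ)/(m:ℝ))) (t*(((k:ℝ)+1)/(m:ℝ))) ∩
        Y ⁻¹' Set.Iic (t*(1 - (k:ℝ)/(m:ℝ))) with hA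
    have hcover : {ω | Z ω ≤ t} ⊆ ⋃ k ∈ Finset.range m, A k := by
      intro ω hω
      simp only [Set.mem_setOf_eq, hZdef] at hω
      have hXlt : X ω < t := by have := hYp ω; linarith
      set c := X ω * m / t with hc
      have hcpos : 0 < c := by
        have := hXp ω; positivity
      have hcle : c ≤ m := by
        rw [hc, div_le_iff₀ ht]
        nlinarith [hXp ω]
      have h1le : 1 ≤ ⌈c⌉₊ := Nat.one_le_ceil_iff.2 hcpos
      set k := ⌈c⌉₊ - 1 with hk
      have hkc : (k:ℝ) = (⌈c⌉₊:ℝ) - 1 := by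
        rw [hk]; push_cast [h1le]; ring
      have hkm : k < m := by
        have h2 : ⌈c⌉₊ ≤ m := Nat.ceil_le.2 (by exact_mod_cast hcle)
        omega
      have hklt : (k:ℝ) < c := by
        rw [hkc]
        have := Nat.ceil_lt_add_one hcpos.le
        linarith
      have hcle2 : c ≤ (k:ℝ) + 1 := by
        rw [hkc]
        have := Nat.le_ceil c
        linarith
      have hXeq : X ω = t * (c / m) := by
        rw [hc]; field_simp
      have hlow : t*((k:ℝ)/(m:ℝ)) < X ω := by
        rw [hXeq]
        have h3 : (k:ℝ)/(m:ℝ) < c/(m:ℝ) := by gcongr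
        nlinarith
      have hup : X ω ≤ t*(((k:ℝ)+1)/(m:ℝ)) := by
        rw [hXeq]
        have h3 : c/(m:ℝ) ≤ ((k:ℝ)+1)/(m:ℝ) := by gcongr
        nlinarith
      have hy : Y ω ≤ t*(1 - (k:ℝ)/(m:ℝ)) := by
        have h' : t*(1 - (k:ℝ)/(m:ℝ)) = t - t*((k:ℝ)/(m:ℝ)) := by ring
        rw [h']; linarith
      simp only [Set.mem_iUnion, Finset.mem_range]
      exact ⟨k, hkm, ⟨⟨hlow, hup⟩, hy⟩⟩
    have hle : P {ω | Z ω ≤ t} ≤ ∑ k ∈ Finset.range m, P (A k) :=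
      le_trans (measure_mono hcover) (measure_biUnion_finset_le (Finset.range m) A)
    have hsum_ne : (∑ k ∈ Finset.range m, P (A k)) ≠ ⊤ :=
      (ENNReal.sum_lt_top.2 fun k _ => measure_lt_top P _).ne
    calc FZ t ≤ (∑ k ∈ Finset.range m, P (A k)).toReal := ENNReal.toReal_mono hsum_ne hle
      _ = ∑ k ∈ Finset.range m, (P (A k)).toReal :=
          ENNReal.toReal_sum (fun k _ => measure_ne_top _ _)
      _ = ∑ k ∈ Finset.range m,
            (FX (t*(((k:ℝ)+1)/(m:ℝ))) - FX (t*((k:ℝ)/(m:ℝ)))) * FY (t*(1 - (k:ℝ)/(m:ℝ))) := by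
          apply Finset.sum_congr rfl
          intro k _
          rw [hA]
          rw [hprod _ _ measurableSet_Ioc measurableSet_Iic, hFYIic,
            hIoc _ _ (by gcongr; linarith : t*((k:ℝ)/(m:ℝ)) ≤ t*(((k:ℝ)+1)/(m:ℝ)))]
  -- lower sandwich
  have hsandL : ∀ m : ℕ, 0 < m → ∀ t : ℝ, 0 < t →
      ∑ k ∈ Finset.range m,
        (FX (t*(((k:ℝ)+1)/(m:ℝ))) - FX (t*((k:ℝ)/(m:ℝ)))) * FY (t*(1 - ((k:ℝ)+1)/(m:ℝ)))
        ≤ FZ t := by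
    intro m hm t ht
    have hmR : (0:ℝ) < m := by exact_mod_cast hm
    set A : ℕ → Set Ω := fun k =>
      X ⁻¹' Set.Ioc (t*((k:ℝ)/(m:ℝ))) (t*(((k:ℝ)+1)/(m:ℝ))) ∩
        Y ⁻¹' Set.Iic (t*(1 - ((k:ℝ)+1)/(m:ℝ))) with hA
    have hAm : ∀ k, MeasurableSet (A k) := fun k =>
      (hXm measurableSet_Ioc).inter (hYm measurableSet_Iic)
    have hdisj : (↑(Finset.range m) : Set ℕ).PairwiseDisjoint A := by
      intro i _ j _ hij
      apply Set.disjoint_left.2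
      intro ω hωi hωj
      rw [hA] at hωi hωj
      simp only [Set.mem_inter_iff, Set.mem_preimage, Set.mem_Ioc, Set.mem_Iic] at hωi hωj
      obtain ⟨⟨hi1, hi2⟩, _⟩ := hωi
      obtain ⟨⟨hj1, hj2⟩, _⟩ := hωj
      rcases lt_or_gt_of_ne hij with h | h
      · have hcast : (i:ℝ)+1 ≤ (j:ℝ) := by exact_mod_cast h
        have : t*(((i:ℝ)+1)/(m:ℝ)) ≤ t*((j:ℝ)/(m:ℝ)) := by gcongr
        linarith
      · have hcast : (j:ℝ)+1 ≤ (i:ℝ) := by exact_mod_cast h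
        have : t*(((j:ℝ)+1)/(m:ℝ)) ≤ t*((i:ℝ)/(m:ℝ)) := by gcongr
        linarith
    have hsub : (⋃ k ∈ Finset.range m, A k) ⊆ {ω | Z ω ≤ t} := by
      intro ω hω
      simp only [Set.mem_iUnion, Finset.mem_range] at hω
      obtain ⟨k, hkm, hωk⟩ := hω
      rw [hA] at hωk
      simp only [Set.mem_inter_iff, Set.mem_preimage, Set.mem_Ioc, Set.mem_Iic] at hωk
      obtain ⟨⟨_, hx⟩, hy⟩ := hωk
      simp only [Set.mem_setOf_eq, hZdef]
      have heq : t*(((k:ℝ)+1)/(m:ℝ)) + t*(1 - ((k:ℝ)+1)/(m:ℝ)) = t := by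
        field_simp
        ring
      linarith
    have heqm := measure_biUnion_finset (μ := P) hdisj (fun k _ => hAm k)
    have hle : (∑ k ∈ Finset.range m, P (A k)) ≤ P {ω | Z ω ≤ t} := by
      rw [← heqm]; exact measure_mono hsub
    calc ∑ k ∈ Finset.range m,
          (FX (t*(((k:ℝ)+1)/(m:ℝ))) - FX (t*((k:ℝ)/(m:ℝ)))) * FY (t*(1 - ((k:ℝ)+1)/(m:ℝ)))
        = ∑ k ∈ Finset.range m, (P (A k)).toReal := by
          apply Finset.sum_congr rfl
          intro k _
          rw [hA]
          rw [hprod _ _ measurableSet_Ioc measurableSet_Iic, hFYIic,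
            hIoc _ _ (by gcongr; linarith : t*((k:ℝ)/(m:ℝ)) ≤ t*(((k:ℝ)+1)/(m:ℝ)))]
      _ = (∑ k ∈ Finset.range m, P (A k)).toReal :=
          (ENNReal.toReal_sum (fun k _ => measure_ne_top _ _)).symm
      _ ≤ FZ t := ENNReal.toReal_mono (measure_ne_top _ _) hle
  -- ratio machinery
  set l : Filter ℝ := nhdsWithin 0 (Set.Ioi 0) with hl
  haveI hNeBot : l.NeBot := by rw [hl]; infer_instance
  set R : ℝ → ℝ := fun t => FZ t / (FX t * FY t) with hRdef
  have hRval : ∀ s, R s = FZ s / (FX s * FY s) := fun s => rfl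
  have hR01 : ∀ t, 0 ≤ R t ∧ R t ≤ 1 := by
    intro t
    rcases le_or_gt t 0 with ht | ht
    · have h0 : FZ t = 0 := cdf'_of_nonpos P hZp ht
      rw [hRval, h0, zero_div]
      norm_num
    · refine ⟨div_nonneg (cdf'_nonneg P _) (mul_nonneg (cdf'_nonneg P _) (cdf'_nonneg P _)), ?_⟩
      rw [hRval, div_le_one (mul_pos (hXpos t ht) (hYpos t ht))]
      exact hupp2 t
  have hbddU : IsBoundedUnder (· ≤ ·) l R := isBoundedUnder_of ⟨1, fun t => (hR01 t).2⟩
  have hbddL : IsBoundedUnder (· ≥ ·) l R := isBoundedUnder_of ⟨0, fun t => (hR01 t).1⟩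
  set L := Filter.liminf R l with hLdef
  set U := Filter.limsup R l with hUdef
  have hc0 : (0:ℝ) < (1/2:ℝ)^α * (1/2:ℝ)^β :=
    mul_pos (Real.rpow_pos_of_pos one_half_pos α) (Real.rpow_pos_of_pos one_half_pos β)
  have hLBev : ∀ᶠ t in l, (FX (t*(1/2))/FX t) * (FY (t*(1/2))/FY t) ≤ R t := by
    filter_upwards [self_mem_nhdsWithin] with t ht
    have ht : (0:ℝ) < t := ht
    have h1 : FX (t*(1/2)) * FY (t*(1/2)) ≤ FZ t := by
      have h2 := hlow2 t
      rw [show t*(1/2:ℝ) = t/2 by ring]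
      exact h2
    have hden : (0:ℝ) < FX t * FY t := mul_pos (hXpos t ht) (hYpos t ht)
    rw [hRval, div_mul_div_comm]
    exact div_le_div_of_nonneg_right h1 hden.le
  have hLBlim : Tendsto (fun t => (FX (t*(1/2))/FX t) * (FY (t*(1/2))/FY t)) l
      (nhds ((1/2:ℝ)^α * (1/2:ℝ)^β)) := (hXr _ one_half_pos).mul (hYr _ one_half_pos)
  have hLc0 : (1/2:ℝ)^α * (1/2:ℝ)^β ≤ L := by
    rw [hLdef, ← hLBlim.liminf_eq]
    exact liminf_le_liminf hLBev (hLBlim.isBoundedUnder_ge) (hbddU.isCoboundedUnder_ge)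
  have hUL : U ≤ L := by
    apply le_of_forall_pos_le_add
    intro ε hε
    obtain ⟨δ, hδ, hucont⟩ : ∃ δ > 0, ∀ x ∈ Set.Icc (0:ℝ) 1, ∀ y ∈ Set.Icc (0:ℝ) 1,
        |x - y| < δ → |x^β - y^β| < ε := by
      have hcont : ContinuousOn (fun x : ℝ => x ^ β) (Set.Icc 0 1) := fun x _ =>
        (Real.continuousAt_rpow_const x β (Or.inr hβ.le)).continuousWithinAt
      have h1 := isCompact_Icc.uniformContinuousOn_of_continuous hcont
      rw [Metric.uniformContinuousOn_iff] at h1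
      obtain ⟨δ, hδ, h⟩ := h1 ε hε
      refine ⟨δ, hδ, fun x hx y hy hxy => ?_⟩
      have := h x hx y hy (by rwa [Real.dist_eq])
      rwa [Real.dist_eq] at this
    obtain ⟨m, hmδ⟩ := exists_nat_gt (1/δ)
    have hm : 0 < m := by
      have h1 : (0:ℝ) < m := lt_trans (by positivity) hmδ
      exact_mod_cast h1
    have hmR : (0:ℝ) < m := by exact_mod_cast hm
    have hstep : (1:ℝ)/m < δ := by
      have := one_div_lt_one_div_of_lt (by positivity) hmδ
      rwa [one_div_one_div] at this
    set Ub : ℝ := ∑ k ∈ Finset.range m,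
      ((((k:ℝ)+1)/(m:ℝ))^α - ((k:ℝ)/(m:ℝ))^α) * ((1 - (k:ℝ)/(m:ℝ))^β) with hUb
    set Lb : ℝ := ∑ k ∈ Finset.range m,
      ((((k:ℝ)+1)/(m:ℝ))^α - ((k:ℝ)/(m:ℝ))^α) * ((1 - ((k:ℝ)+1)/(m:ℝ))^β) with hLb
    have hUlim : Tendsto (fun t => ∑ k ∈ Finset.range m,
        (FX (t*(((k:ℝ)+1)/(m:ℝ)))/FX t - FX (t*((k:ℝ)/(m:ℝ)))/FX t)
          * (FY (t*(1 - (k:ℝ)/(m:ℝ)))/FY t)) l (nhds Ub) := by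
      rw [hUb]
      apply tendsto_finset_sum
      intro k hk
      have hkm : k < m := Finset.mem_range.1 hk
      have h3 : (0:ℝ) ≤ 1 - (k:ℝ)/(m:ℝ) := by
        have hkc : (k:ℝ) ≤ m := by exact_mod_cast hkm.le
        rw [sub_nonneg, div_le_one hmR]
        exact hkc
      exact ((ratio_tendsto hα hFX0 hXr (by positivity)).sub
        (ratio_tendsto hα hFX0 hXr (by positivity))).mul (ratio_tendsto hβ hFY0 hYr h3)
    have hLlim : Tendsto (fun t => ∑ k ∈ Finset.range m,
        (FX (t*(((k:ℝ)+1)/(m:ℝ)))/FX t - FX (t*((k:ℝ)/(m:ℝ)))/FX t)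
          * (FY (t*(1 - ((k:ℝ)+1)/(m:ℝ)))/FY t)) l (nhds Lb) := by
      rw [hLb]
      apply tendsto_finset_sum
      intro k hk
      have hkm : k < m := Finset.mem_range.1 hk
      have h3 : (0:ℝ) ≤ 1 - ((k:ℝ)+1)/(m:ℝ) := by
        have hkc : (k:ℝ)+1 ≤ m := by exact_mod_cast hkm
        rw [sub_nonneg, div_le_one hmR]
        exact hkc
      exact ((ratio_tendsto hα hFX0 hXr (by positivity)).sub
        (ratio_tendsto hα hFX0 hXr (by positivity))).mul (ratio_tendsto hβ hFY0 hYr h3)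
    have hUev : ∀ᶠ t in l, R t ≤ ∑ k ∈ Finset.range m,
        (FX (t*(((k:ℝ)+1)/(m:ℝ)))/FX t - FX (t*((k:ℝ)/(m:ℝ)))/FX t)
          * (FY (t*(1 - (k:ℝ)/(m:ℝ)))/FY t) := by
      filter_upwards [self_mem_nhdsWithin] with t ht
      have ht : (0:ℝ) < t := ht
      have hFXt : FX t ≠ 0 := (hXpos t ht).ne'
      have hFYt : FY t ≠ 0 := (hYpos t ht).ne'
      have hden : (0:ℝ) < FX t * FY t := mul_pos (hXpos t ht) (hYpos t ht)
      have h1 := hsandU m hm t ht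
      rw [hRval]
      calc FZ t / (FX t * FY t)
          ≤ (∑ k ∈ Finset.range m,
              (FX (t*(((k:ℝ)+1)/(m:ℝ))) - FX (t*((k:ℝ)/(m:ℝ)))) * FY (t*(1 - (k:ℝ)/(m:ℝ))))
            / (FX t * FY t) := div_le_div_of_nonneg_right h1 hden.le
        _ = ∑ k ∈ Finset.range m,
              (FX (t*(((k:ℝ)+1)/(m:ℝ)))/FX t - FX (t*((k:ℝ)/(m:ℝ)))/FX t)
                * (FY (t*(1 - (k:ℝ)/(m:ℝ)))/FY t) := by
            rw [Finset.sum_div]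
            apply Finset.sum_congr rfl
            intro k _
            field_simp
            try ring
    have hLev : ∀ᶠ t in l, (∑ k ∈ Finset.range m,
        (FX (t*(((k:ℝ)+1)/(m:ℝ)))/FX t - FX (t*((k:ℝ)/(m:ℝ)))/FX t)
          * (FY (t*(1 - ((k:ℝ)+1)/(m:ℝ)))/FY t)) ≤ R t := by
      filter_upwards [self_mem_nhdsWithin] with t ht
      have ht : (0:ℝ) < t := ht
      have hFXt : FX t ≠ 0 := (hXpos t ht).ne'
      have hFYt : FY t ≠ 0 := (hYpos t ht).ne'
      have hden : (0:ℝ) < FX t * FY t := mul_pos (hXpos t ht) (hYpos t ht)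
      have h1 := hsandL m hm t ht
      rw [hRval]
      calc ∑ k ∈ Finset.range m,
            (FX (t*(((k:ℝ)+1)/(m:ℝ)))/FX t - FX (t*((k:ℝ)/(m:ℝ)))/FX t)
              * (FY (t*(1 - ((k:ℝ)+1)/(m:ℝ)))/FY t)
          = (∑ k ∈ Finset.range m,
              (FX (t*(((k:ℝ)+1)/(m:ℝ))) - FX (t*((k:ℝ)/(m:ℝ)))) * FY (t*(1 - ((k:ℝ)+1)/(m:ℝ))))
            / (FX t * FY t) := by
            rw [Finset.sum_div]
            apply Finset.sum_congr rfl
            intro k _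
            field_simp
            try ring
        _ ≤ FZ t / (FX t * FY t) := div_le_div_of_nonneg_right h1 hden.le
    have hUle : U ≤ Ub := by
      rw [hUdef, ← hUlim.limsup_eq]
      exact limsup_le_limsup hUev (hbddL.isCoboundedUnder_le) (hUlim.isBoundedUnder_le)
    have hLge : Lb ≤ L := by
      rw [hLdef, ← hLlim.liminf_eq]
      exact liminf_le_liminf hLev (hLlim.isBoundedUnder_ge) (hbddU.isCoboundedUnder_ge)
    have hdiffs : Ub - Lb ≤ ε := by
      rw [hUb, hLb, ← Finset.sum_sub_distrib]
      have heach : ∀ k ∈ Finset.range m,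
          ((((k:ℝ)+1)/(m:ℝ))^α - ((k:ℝ)/(m:ℝ))^α) * ((1 - (k:ℝ)/(m:ℝ))^β)
          - ((((k:ℝ)+1)/(m:ℝ))^α - ((k:ℝ)/(m:ℝ))^α) * ((1 - ((k:ℝ)+1)/(m:ℝ))^β)
          ≤ ((((k:ℝ)+1)/(m:ℝ))^α - ((k:ℝ)/(m:ℝ))^α) * ε := by
        intro k hk
        have hkm : k < m := Finset.mem_range.1 hk
        have hkc : (k:ℝ)+1 ≤ m := by exact_mod_cast hkm
        rw [← mul_sub]
        apply mul_le_mul_of_nonneg_left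
        · have hx : (1 - ((k:ℝ)+1)/(m:ℝ)) ∈ Set.Icc (0:ℝ) 1 := by
            constructor
            · rw [sub_nonneg, div_le_one hmR]; exact hkc
            · have : (0:ℝ) ≤ ((k:ℝ)+1)/(m:ℝ) := by positivity
              linarith
          have hy : (1 - (k:ℝ)/(m:ℝ)) ∈ Set.Icc (0:ℝ) 1 := by
            constructor
            · rw [sub_nonneg, div_le_one hmR]; linarith
            · have : (0:ℝ) ≤ (k:ℝ)/(m:ℝ) := by positivity
              linarith
          have hd : |(1 - (k:ℝ)/(m:ℝ)) - (1 - ((k:ℝ)+1)/(m:ℝ))| < δ := by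
            have heq2 : (1 - (k:ℝ)/(m:ℝ)) - (1 - ((k:ℝ)+1)/(m:ℝ)) = 1/(m:ℝ) := by
              field_simp
              ring
            rw [heq2, abs_of_pos (by positivity)]
            exact hstep
          have h2 := hucont _ hy _ hx hd
          calc (1 - (k:ℝ)/(m:ℝ))^β - (1 - ((k:ℝ)+1)/(m:ℝ))^β
              ≤ |(1 - (k:ℝ)/(m:ℝ))^β - (1 - ((k:ℝ)+1)/(m:ℝ))^β| := le_abs_self _
            _ ≤ ε := h2.le
        · apply sub_nonneg.2
          apply Real.rpow_le_rpow (by positivity) (by gcongr <;> linarith) hα.le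
      calc ∑ k ∈ Finset.range m,
            (((((k:ℝ)+1)/(m:ℝ))^α - ((k:ℝ)/(m:ℝ))^α) * ((1 - (k:ℝ)/(m:ℝ))^β)
            - ((((k:ℝ)+1)/(m:ℝ))^α - ((k:ℝ)/(m:ℝ))^α) * ((1 - ((k:ℝ)+1)/(m:ℝ))^β))
          ≤ ∑ k ∈ Finset.range m, ((((k:ℝ)+1)/(m:ℝ))^α - ((k:ℝ)/(m:ℝ))^α) * ε :=
            Finset.sum_le_sum heach
        _ = (∑ k ∈ Finset.range m, ((((k:ℝ)+1)/(m:ℝ))^α - ((k:ℝ)/(m:ℝ))^α)) * ε := by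
            rw [← Finset.sum_mul]
        _ = 1 * ε := by
            congr 1
            have hcongr : ∑ k ∈ Finset.range m, ((((k:ℝ)+1)/(m:ℝ))^α - ((k:ℝ)/(m:ℝ))^α)
                = ∑ k ∈ Finset.range m,
                  ((fun j : ℕ => ((j:ℝ)/(m:ℝ))^α) (k+1) - (fun j : ℕ => ((j:ℝ)/(m:ℝ))^α) k) := by
              apply Finset.sum_congr rfl
              intro k _
              push_cast
              ring_nf
            rw [hcongr, Finset.sum_range_sub (fun j : ℕ => ((j:ℝ)/(m:ℝ))^α) m]
            simp only [Nat.cast_zero, zero_div, Real.zero_rpow hα.ne', sub_zero,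
              div_self hmR.ne', Real.one_rpow]
        _ = ε := one_mul ε
    linarith [hUle, hLge]
  have hLU : L ≤ U := liminf_le_limsup hbddU hbddL
  have hEq : Filter.liminf R l = U := le_antisymm hLU hUL
  have hUpos : 0 < U := lt_of_lt_of_le hc0 (le_trans hLc0 hLU)
  have hRtend : Tendsto R l (nhds U) :=
    tendsto_of_liminf_eq_limsup hEq rfl hbddU hbddL
  -- final regular variation
  intro b hb
  have hmap : Tendsto (fun t : ℝ => t * b) l l := by
    rw [hl, tendsto_nhdsWithin_iff]
    constructor
    · have h1 : Tendsto (fun t : ℝ => t * b) (nhds 0) (nhds (0 * b)) :=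
        (continuous_id.mul continuous_const).tendsto 0
      rw [zero_mul] at h1
      exact h1.mono_left nhdsWithin_le_nhds
    · filter_upwards [self_mem_nhdsWithin] with t ht
      exact mul_pos ht hb
  have hcomp : Tendsto (fun t => R (t*b)) l (nhds U) := hRtend.comp hmap
  have hmain := (hcomp.mul ((hXr b hb).mul (hYr b hb))).div hRtend hUpos.ne'
  have hval : (U * (b^α * b^β)) / U = b^(α+β) := by
    rw [mul_comm, mul_div_assoc, div_self hUpos.ne', mul_one, Real.rpow_add hb]
  rw [hval] at hmain
  apply Filter.Tendsto.congr' _ hmain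
  filter_upwards [self_mem_nhdsWithin] with t ht
  have ht : (0:ℝ) < t := ht
  have htb : (0:ℝ) < t*b := mul_pos ht hb
  have h1 : FX t ≠ 0 := (hXpos t ht).ne'
  have h2 : FY t ≠ 0 := (hYpos t ht).ne'
  have h3 : FX (t*b) ≠ 0 := (hXpos _ htb).ne'
  have h4 : FY (t*b) ≠ 0 := (hYpos _ htb).ne'
  have h5 : FZ t ≠ 0 := (hFZpos t ht).ne'
  simp only [Pi.div_apply, hRval]
  field_simp
  try ring

end Part2


section Part3

variable {d : ℕ} {Ω : Type*} [MeasurableSpace Ω]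

/-- The conductance at the directed edge indexed by `p`. -/
def ff (w : Ω → V d → V d → ℝ) (p : V d × Fin d) (ω : Ω) : ℝ :=
  w ω p.1 (p.1 + Pi.single p.2 1)

lemma sum_abs_single (i : Fin d) : (∑ j, |(Pi.single i 1 : V d) j|) = 1 := by
  have h : ∀ j, |(Pi.single i 1 : V d) j| = if j = i then 1 else 0 := by
    intro j
    by_cases h : j = i
    · subst h; simp [Pi.single_eq_same]
    · rw [if_neg h, Pi.single_eq_of_ne h, abs_zero]
  rw [Finset.sum_congr rfl (fun j _ => h j)]
  simp

lemma adj_add_single (x : V d) (i : Fin d) : adj x (x + Pi.single i 1) := by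
  unfold adj
  have h : ∀ j, |x j - (x + (Pi.single i 1 : V d)) j| = |(Pi.single i 1 : V d) j| := by
    intro j
    simp only [Pi.add_apply]
    rw [show x j - (x j + (Pi.single i 1 : V d) j) = -((Pi.single i 1 : V d) j) by ring,
      abs_neg]
  rw [Finset.sum_congr rfl (fun j _ => h j)]
  exact sum_abs_single i

variable (P : Measure Ω) [IsProbabilityMeasure P] {w : Ω → V d → V d → ℝ} {F : ℝ → ℝ}

theorem good_sum (hiid : IIDConductances P w F) (hF : Continuous F) {γ : ℝ}
    (hreg : RegVarZero F γ) (hγ : 0 < γ) (hd : 0 < d) :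
    ∀ (S : Finset (V d × Fin d)), S.Nonempty →
      (∀ t, 0 < t → 0 < cdf' P (fun ω => ∑ p ∈ S, ff w p ω) t) ∧
      RegVarZero (cdf' P (fun ω => ∑ p ∈ S, ff w p ω)) ((S.card : ℝ) * γ) ∧
      (∀ c : ℝ, P {ω | (∑ p ∈ S, ff w p ω) = c} = 0) := by
  obtain ⟨hsymm, hpos, hmeas, hind, hmarg⟩ := hiid
  have hffm : ∀ p : V d × Fin d, Measurable (ff w p) := fun p => hmeas _ _
  have hffpos : ∀ (p : V d × Fin d) ω, 0 < ff w p ω :=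
    fun p ω => hpos ω _ _ (adj_add_single p.1 p.2)
  have hcdf : ∀ p : V d × Fin d, cdf' P (ff w p) = F := by
    intro p; funext u; exact hmarg p.1 p.2 u
  set p0 : V d × Fin d := (0, ⟨0, hd⟩) with hp0
  have hFmono : Monotone F := by rw [← hcdf p0]; exact cdf'_mono P
  have hF0 : F 0 = 0 := by rw [← hcdf p0]; exact cdf'_of_nonpos P (hffpos p0) le_rfl
  have hFnonneg : ∀ t, 0 ≤ F t := fun t => by rw [← hcdf p0]; exact cdf'_nonneg P t
  have hFpos : ∀ t, 0 < t → 0 < F t := by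
    intro t ht
    by_contra hc
    push_neg at hc
    have ht0 : F t = 0 := le_antisymm hc (hFnonneg t)
    have hev : ∀ᶠ a in nhdsWithin (0:ℝ) (Set.Ioi 0), (fun a => F (a * 1) / F a) a = 0 := by
      filter_upwards [Ioo_mem_nhdsGT_of_mem (Set.left_mem_Ico.2 ht)] with a ha
      have h0 : F a = 0 := le_antisymm (ht0 ▸ hFmono ha.2.le) (hFnonneg a)
      simp [h0]
    have h1 := hreg 1 one_pos
    have h2 : Filter.Tendsto (fun a => F (a*1)/F a) (nhdsWithin (0:ℝ) (Set.Ioi 0)) (nhds 0) :=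
      Filter.Tendsto.congr' (hev.mono fun a ha => ha.symm) tendsto_const_nhds
    have h3 := tendsto_nhds_unique h1 h2
    rw [Real.one_rpow] at h3
    norm_num at h3
  have hatom : ∀ (p : V d × Fin d) (c : ℝ), P {ω | ff w p ω = c} = 0 := by
    intro p c
    apply cdf'_atom_zero P (hffm p) _ c
    rw [hcdf p]; exact hF
  intro S hS
  induction hS using Finset.Nonempty.cons_induction with
  | singleton a =>
    have hsum : (fun ω => ∑ p ∈ ({a} : Finset (V d × Fin d)), ff w p ω) = ff w a := by
      funext ω; simp
    rw [hsum]
    refine ⟨?_, ?_, ?_⟩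
    · intro t ht; rw [hcdf a]; exact hFpos t ht
    · rw [hcdf a]
      simp only [Finset.card_singleton, Nat.cast_one, one_mul]
      exact hreg
    · intro c
      have : {ω | (∑ p ∈ ({a} : Finset (V d × Fin d)), ff w p ω) = c} = {ω | ff w a ω = c} := by
        ext ω; simp
      rw [this]; exact hatom a c
  | cons a s h hs ih =>
    obtain ⟨hpos', hreg', hatom'⟩ := ih
    have hXm : Measurable (fun ω => ∑ p ∈ s, ff w p ω) :=
      Finset.measurable_sum s (fun p _ => hffm p)
    have hInd : IndepFun (fun ω => ∑ p ∈ s, ff w p ω) (ff w a) P := by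
      have hInd0 := hind.indepFun_finsetSum_of_notMem
        (f := fun (p : V d × Fin d) ω => w ω p.1 (p.1 + Pi.single p.2 1))
        (fun p => hmeas p.1 (p.1 + Pi.single p.2 1)) h
      have hfe : (∑ j ∈ s, (fun (p : V d × Fin d) (ω : Ω) => w ω p.1 (p.1 + Pi.single p.2 1)) j)
          = (fun ω => ∑ p ∈ s, ff w p ω) := by
        funext ω; rw [Finset.sum_apply]; rfl
      rwa [hfe] at hInd0
    have hα : (0:ℝ) < (s.card : ℝ) * γ :=
      mul_pos (by exact_mod_cast hs.card_pos) hγ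
    have hYr : RegVarZero (cdf' P (ff w a)) γ := by rw [hcdf a]; exact hreg
    have hYpos : ∀ t, 0 < t → 0 < cdf' P (ff w a) t := by
      intro t ht; rw [hcdf a]; exact hFpos t ht
    have key := conv_regvar P hXm (hffm a)
      (fun ω => Finset.sum_pos (fun p _ => hffpos p ω) hs) (fun ω => hffpos a ω)
      hInd hα hγ hreg' hYr hpos' hYpos
    have hsum2 : (fun ω => ∑ p ∈ Finset.cons a s h, ff w p ω)
        = fun ω => (∑ p ∈ s, ff w p ω) + ff w a ω := by
      funext ω; rw [Finset.sum_cons]; ring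
    refine ⟨?_, ?_, ?_⟩
    · intro t ht; rw [hsum2]; exact key.1 t ht
    · rw [hsum2]
      have hcard : ((Finset.cons a s h).card : ℝ) * γ = (s.card : ℝ) * γ + γ := by
        rw [Finset.card_cons]; push_cast; ring
      rw [hcard]; exact key.2
    · intro c
      have hset : {ω | (∑ p ∈ Finset.cons a s h, ff w p ω) = c}
          = {ω | (∑ p ∈ s, ff w p ω) + ff w a ω = c} := by
        ext ω
        simp only [Set.mem_setOf_eq, Finset.sum_cons]
        constructor <;> intro h' <;> linarith
      rw [hset]
      exact conv_atomless P hXm (hffm a) hInd (hatom a) c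

end Part3

section Part4

variable {d : ℕ}

lemma sum_abs_eq_one {y : V d} (h : (∑ i, |y i|) = 1) :
    ∃ i, y = Pi.single i 1 ∨ y = Pi.single i (-1) := by
  have hex : ∃ i, y i ≠ 0 := by
    by_contra hc
    push_neg at hc
    rw [Finset.sum_eq_zero (fun i _ => by rw [hc i, abs_zero])] at h
    norm_num at h
  obtain ⟨i, hi⟩ := hex
  have h1 : 1 ≤ |y i| := by
    rcases hi.lt_or_gt with h' | h'
    · rw [abs_of_neg h']; omega
    · rw [abs_of_pos h']; omega
  have hadd := Finset.add_sum_erase Finset.univ (fun j => |y j|) (Finset.mem_univ i)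
  rw [h] at hadd
  have hnonneg : ∀ j ∈ Finset.univ.erase i, 0 ≤ |y j| := fun j _ => abs_nonneg _
  have hsum_nonneg : 0 ≤ ∑ j ∈ Finset.univ.erase i, |y j| := Finset.sum_nonneg hnonneg
  have hsum_zero : ∑ j ∈ Finset.univ.erase i, |y j| = 0 := by linarith
  have hzero : ∀ j ∈ Finset.univ.erase i, |y j| = 0 :=
    fun j hj => (Finset.sum_eq_zero_iff_of_nonneg hnonneg).1 hsum_zero j hj
  have habs1 : |y i| = 1 := by linarith
  have hyj : ∀ j, j ≠ i → y j = 0 := by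
    intro j hj
    exact abs_eq_zero.1 (hzero j (Finset.mem_erase.2 ⟨hj, Finset.mem_univ j⟩))
  have hyi : y i = 1 ∨ y i = -1 := (abs_eq (by norm_num : (0:ℤ) ≤ 1)).1 habs1
  refine ⟨i, ?_⟩
  have hfun : ∀ v : ℤ, y i = v → y = Pi.single i v := by
    intro v hv
    funext j
    by_cases hji : j = i
    · subst hji; rw [Pi.single_eq_same]; exact hv
    · rw [Pi.single_eq_of_ne hji]; exact hyj j hji
  rcases hyi with hv | hv
  · exact Or.inl (hfun 1 hv)
  · exact Or.inr (hfun (-1) hv)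

/-- The unit vectors `±e_i`. -/
def eVec (j : Fin d ⊕ Fin d) : V d :=
  Sum.elim (fun i => Pi.single i 1) (fun i => -Pi.single i 1) j

/-- The edge index corresponding to each neighbor of `0`. -/
def phiIdx (j : Fin d ⊕ Fin d) : V d × Fin d :=
  Sum.elim (fun i => ((0 : V d), i)) (fun i => (-Pi.single i 1, i)) j

lemma single_injective : Function.Injective (fun i : Fin d => (Pi.single i 1 : V d)) := by
  intro i j hij
  by_contra hne
  have h := congrFun hij i
  simp only [Pi.single_eq_same] at h
  rw [Pi.single_eq_of_ne hne] at h
  norm_num at h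

lemma single_ne_neg (i i' : Fin d) : (Pi.single i 1 : V d) ≠ -Pi.single i' 1 := by
  intro hcontra
  have h := congrFun hcontra i
  simp only [Pi.single_eq_same, Pi.neg_apply] at h
  by_cases hii : i' = i
  · subst hii; rw [Pi.single_eq_same] at h; omega
  · rw [Pi.single_eq_of_ne (fun hc => hii hc.symm)] at h
    norm_num at h

lemma neg_single_ne_zero (i : Fin d) : (-Pi.single i 1 : V d) ≠ 0 := by
  intro hcontra
  have h := congrFun hcontra i
  simp only [Pi.neg_apply, Pi.single_eq_same, Pi.zero_apply] at h
  omega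

lemma eVec_injective : Function.Injective (eVec (d := d)) := by
  intro a b hab
  cases a with
  | inl i =>
    cases b with
    | inl i' =>
      simp only [eVec, Sum.elim_inl] at hab
      exact congrArg Sum.inl (single_injective hab)
    | inr i' =>
      simp only [eVec, Sum.elim_inl, Sum.elim_inr] at hab
      exact absurd hab (single_ne_neg i i')
  | inr i =>
    cases b with
    | inl i' =>
      simp only [eVec, Sum.elim_inl, Sum.elim_inr] at hab
      exact absurd hab.symm (single_ne_neg i' i)
    | inr i' =>
      simp only [eVec, Sum.elim_inr] at hab
      have : (Pi.single i 1 : V d) = Pi.single i' 1 := by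
        have := congrArg Neg.neg hab
        simpa using this
      exact congrArg Sum.inr (single_injective this)

lemma phiIdx_injective : Function.Injective (phiIdx (d := d)) := by
  intro a b hab
  cases a with
  | inl i =>
    cases b with
    | inl i' =>
      simp only [phiIdx, Sum.elim_inl, Prod.mk.injEq] at hab
      exact congrArg Sum.inl hab.2
    | inr i' =>
      simp only [phiIdx, Sum.elim_inl, Sum.elim_inr, Prod.mk.injEq] at hab
      exact absurd hab.1.symm (neg_single_ne_zero i')
  | inr i =>
    cases b with
    | inl i' =>
      simp only [phiIdx, Sum.elim_inl, Sum.elim_inr, Prod.mk.injEq] at hab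
      exact absurd hab.1 (neg_single_ne_zero i)
    | inr i' =>
      simp only [phiIdx, Sum.elim_inr, Prod.mk.injEq] at hab
      exact congrArg Sum.inr hab.2

lemma nbrs_zero_eq : nbrs (0 : V d) = Finset.image eVec Finset.univ := by
  ext y
  simp only [nbrs, Finset.mem_filter, Finset.mem_Icc, Finset.mem_image, Finset.mem_univ,
    true_and]
  constructor
  · rintro ⟨_, hadj⟩
    unfold adj at hadj
    have hsum : (∑ i, |y i|) = 1 := by
      rw [← hadj]
      apply Finset.sum_congr rfl
      intro i _
      rw [Pi.zero_apply, zero_sub, abs_neg]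
    obtain ⟨i, hi⟩ := sum_abs_eq_one hsum
    rcases hi with h | h
    · exact ⟨Sum.inl i, by rw [eVec, Sum.elim_inl, h]⟩
    · refine ⟨Sum.inr i, ?_⟩
      rw [eVec, Sum.elim_inr, h, ← Pi.single_neg]
  · rintro ⟨j, rfl⟩
    have habs : (∑ i, |(0:V d) i - eVec j i|) = 1 := by
      have h : ∀ i, |(0:V d) i - eVec j i| = |eVec j i| := by
        intro i; rw [Pi.zero_apply, zero_sub, abs_neg]
      rw [Finset.sum_congr rfl (fun i _ => h i)]
      cases j with
      | inl i => exact sum_abs_single i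
      | inr i =>
        have h2 : ∀ k, |(eVec (Sum.inr i) : V d) k| = |(Pi.single i 1 : V d) k| := by
          intro k
          simp only [eVec, Sum.elim_inr, Pi.neg_apply, abs_neg]
        rw [Finset.sum_congr rfl (fun k _ => h2 k)]
        exact sum_abs_single i
    refine ⟨?_, habs⟩
    constructor
    · intro k
      have := habs
      simp only [Pi.sub_apply, Pi.zero_apply, Pi.one_apply]
      cases j with
      | inl i =>
        simp only [eVec, Sum.elim_inl, Pi.single_apply]
        split <;> norm_num
      | inr i =>
        simp only [eVec, Sum.elim_inr, Pi.neg_apply, Pi.single_apply]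
        split <;> norm_num
    · intro k
      simp only [Pi.add_apply, Pi.zero_apply, Pi.one_apply]
      cases j with
      | inl i =>
        simp only [eVec, Sum.elim_inl, Pi.single_apply]
        split <;> norm_num
      | inr i =>
        simp only [eVec, Sum.elim_inr, Pi.neg_apply, Pi.single_apply]
        split <;> norm_num

/-- The index set of the `2d` edges incident to the origin. -/
def S0 (d : ℕ) : Finset (V d × Fin d) := Finset.image phiIdx Finset.univ

lemma S0_card : (S0 d).card = 2 * d := by
  rw [S0, Finset.card_image_of_injective _ phiIdx_injective, Finset.card_univ,
    Fintype.card_sum, Fintype.card_fin]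
  ring

lemma S0_nonempty (hd : 0 < d) : (S0 d).Nonempty :=
  ⟨phiIdx (Sum.inl ⟨0, hd⟩), Finset.mem_image_of_mem _ (Finset.mem_univ _)⟩

lemma speed_zero_eq {Ω : Type*} (w : Ω → V d → V d → ℝ) (ω : Ω)
    (hsymm : ∀ x y, w ω x y = w ω y x) :
    speed (w ω) 0 = ∑ p ∈ S0 d, ff w p ω := by
  rw [speed, nbrs_zero_eq, Finset.sum_image (fun a _ b _ hab => eVec_injective hab),
    S0, Finset.sum_image (fun a _ b _ hab => phiIdx_injective hab)]
  apply Finset.sum_congr rfl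
  intro j _
  cases j with
  | inl i =>
    simp only [eVec, phiIdx, Sum.elim_inl, ff]
    rw [zero_add]
  | inr i =>
    simp only [eVec, phiIdx, Sum.elim_inr, ff]
    rw [neg_add_cancel]
    exact hsymm 0 _

lemma box_card (n : ℕ) : (box d n).card = (2*n+1)^d := by
  rw [box, Pi.card_Icc]
  have h : ∀ i : Fin d, (Finset.Icc (-(n:ℤ)) ((n:ℤ))).card = 2*n+1 := by
    intro i
    rw [Int.card_Icc]
    omega
  rw [Finset.prod_congr rfl (fun i _ => h i), Finset.prod_const, Finset.card_univ,
    Fintype.card_fin]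

end Part4

section Part5

lemma hfun_spec {Fp : ℝ → ℝ} (hmono : Monotone Fp) (hcont : Continuous Fp)
    (h0 : Fp 0 = 0)
    {u : ℝ} (hu : 2 ≤ u) {t₀ : ℝ} (ht₀ : 1/u < Fp t₀) :
    0 < hfun Fp u ∧ Fp (1 / hfun Fp u) = 1/u := by
  have hupos : (0:ℝ) < u := by linarith
  have huinv : (0:ℝ) < 1/u := by positivity
  have ht₀pos : 0 < t₀ := by
    by_contra hc
    push_neg at hc
    have h1 := hmono hc
    rw [h0] at h1
    linarith
  obtain ⟨t₁, ht₁pos, ht₁lt, ht₁small⟩ : ∃ t₁, 0 < t₁ ∧ t₁ < t₀ ∧ Fp t₁ < 1/u := by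
    have hc0 : Filter.Tendsto Fp (nhds 0) (nhds 0) := by
      have h1 := hcont.tendsto 0
      rwa [h0] at h1
    have hev : ∀ᶠ s in nhds (0:ℝ), Fp s < 1/u := hc0.eventually_lt_const huinv
    obtain ⟨δ, hδpos, hδ⟩ := Metric.eventually_nhds_iff.1 hev
    refine ⟨min (δ/2) (t₀/2), by positivity, ?_, ?_⟩
    · calc min (δ/2) (t₀/2) ≤ t₀/2 := min_le_right _ _
        _ < t₀ := by linarith
    · apply hδ
      rw [Real.dist_eq]
      have h1 : min (δ/2) (t₀/2) ≤ δ/2 := min_le_left _ _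
      have h2 : (0:ℝ) < min (δ/2) (t₀/2) := by positivity
      rw [abs_of_pos (by linarith)]
      linarith
  obtain ⟨c, hc_mem, hc_eq⟩ : ∃ c ∈ Set.Icc t₁ t₀, Fp c = 1/u := by
    have hsub := intermediate_value_Icc ht₁lt.le hcont.continuousOn
    exact hsub ⟨ht₁small.le, ht₀.le⟩
  have hcpos : 0 < c := lt_of_lt_of_le ht₁pos hc_mem.1
  set A := {s : ℝ | 0 < s ∧ 1 / Fp (1/s) = u} with hA
  have hAchar : ∀ s ∈ A, Fp (1/s) = 1/u := by
    intro s hs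
    rw [← hs.2, one_div_one_div]
  have hmemA : (1/c) ∈ A := by
    refine ⟨by positivity, ?_⟩
    rw [one_div_one_div, hc_eq, one_div_one_div]
  have hAlb : ∀ s ∈ A, 1/t₀ ≤ s := by
    intro s hs
    by_contra hc'
    push_neg at hc'
    have hspos : 0 < s := hs.1
    have h1 : t₀ < 1/s := by
      rw [lt_div_iff₀ hspos]
      have h2 : s * t₀ < 1 := by
        have h3 := mul_lt_mul_of_pos_right hc' ht₀pos
        rwa [one_div_mul_cancel ht₀pos.ne'] at h3
      calc t₀ * s = s * t₀ := mul_comm _ _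
        _ < 1 := h2
    have h2 : 1/u < Fp (1/s) := lt_of_lt_of_le ht₀ (hmono h1.le)
    have h3 := hAchar s hs
    linarith
  have hAeq : A = {s : ℝ | 1/t₀ ≤ s ∧ Fp (1/s) = 1/u} := by
    ext s
    constructor
    · intro hs; exact ⟨hAlb s hs, hAchar s hs⟩
    · rintro ⟨h1, h2⟩
      have hspos : 0 < s := lt_of_lt_of_le (by positivity) h1
      exact ⟨hspos, by rw [h2, one_div_one_div]⟩
  have hclosed : IsClosed A := by
    rw [hAeq]
    have hcont' : ContinuousOn (fun s : ℝ => Fp (1/s)) (Set.Ici (1/t₀)) := by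
      apply Continuous.comp_continuousOn hcont
      apply ContinuousOn.div continuousOn_const continuousOn_id
      intro x hx
      have h1 : (0:ℝ) < 1/t₀ := by positivity
      exact (lt_of_lt_of_le h1 hx).ne'
    have h2 := hcont'.preimage_isClosed_of_isClosed isClosed_Ici
      (isClosed_singleton (x := 1/u))
    have h3 : {s : ℝ | 1/t₀ ≤ s ∧ Fp (1/s) = 1/u}
        = Set.Ici (1/t₀) ∩ (fun s : ℝ => Fp (1/s)) ⁻¹' {1/u} := by
      ext s
      simp [Set.mem_inter_iff, Set.mem_preimage, Set.mem_Ici]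
    rw [h3]
    exact h2
  have hbdd : BddBelow A := ⟨1/t₀, fun s hs => hAlb s hs⟩
  have hne : A.Nonempty := ⟨1/c, hmemA⟩
  have hmem : sInf A ∈ A := hclosed.csInf_mem hne hbdd
  have hval : hfun Fp u = sInf A := by rw [hA]; rfl
  rw [hval]
  exact ⟨hmem.1, hAchar _ hmem⟩

lemma final_limit {Fp : ℝ → ℝ} {σ : ℝ} (hmono : Monotone Fp) (hcont : Continuous Fp)
    (h0 : Fp 0 = 0) (hpos : ∀ t, 0 < t → 0 < Fp t)
    (hreg : RegVarZero Fp σ) {t₀ : ℝ} (ht₀ : 1/2 < Fp t₀)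
    {N : ℕ → ℝ} (hN : Filter.Tendsto N Filter.atTop Filter.atTop)
    {ζ : ℝ} (hζ : 0 < ζ) :
    Filter.Tendsto (fun n => N n * Fp ((1 / hfun Fp (N n)) * ζ)) Filter.atTop
      (nhds (ζ ^ σ)) := by
  have hNge2 : ∀ᶠ n in Filter.atTop, 2 ≤ N n := hN.eventually_ge_atTop 2
  have hkey : ∀ᶠ n in Filter.atTop,
      0 < hfun Fp (N n) ∧ Fp (1 / hfun Fp (N n)) = 1 / N n := by
    filter_upwards [hNge2] with n hn
    apply hfun_spec hmono hcont h0 hn (t₀ := t₀)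
    have h1 : 1 / N n ≤ 1/2 := by
      apply one_div_le_one_div_of_le <;> linarith
    linarith
  have hato : Filter.Tendsto (fun n => 1 / hfun Fp (N n)) Filter.atTop
      (nhdsWithin 0 (Set.Ioi 0)) := by
    rw [tendsto_nhdsWithin_iff]
    constructor
    · refine tendsto_order.2 ⟨?_, ?_⟩
      · intro c hc
        filter_upwards [hkey] with n hn
        have h1 := hn.1
        have h2 : 0 < 1 / hfun Fp (N n) := by positivity
        linarith
      · intro δ hδ
        have hNinv : Filter.Tendsto (fun n => 1 / N n) Filter.atTop (nhds 0) := by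
          have := hN.inv_tendsto_atTop; simp only [one_div]; exact this
        have hev2 : ∀ᶠ n in Filter.atTop, 1 / N n < Fp δ :=
          hNinv.eventually_lt_const (hpos δ hδ)
        filter_upwards [hkey, hev2] with n hn h2
        by_contra hcon
        push_neg at hcon
        have h3 : Fp δ ≤ Fp (1 / hfun Fp (N n)) := hmono hcon
        rw [hn.2] at h3
        linarith
    · filter_upwards [hkey] with n hn
      have h1 := hn.1
      exact Set.mem_Ioi.2 (by positivity)
  have hcomp := (hreg ζ hζ).comp hato
  apply Filter.Tendsto.congr' _ hcomp
  filter_upwards [hkey, hNge2] with n hn hn2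
  simp only [Function.comp_apply]
  have hNn : (0:ℝ) < N n := by linarith
  rw [hn.2]
  field_simp
  try ring

end Part5

end SpeedTail

/-- `|B_n| · ℙ[π_0 ≤ a_n ζ] → ζ^{2dγ}` where `a_n = 1/h(|B_n|)`. -/
theorem speed_tail_limit {d : ℕ} (hd : 2 ≤ d) {Ω : Type*}
    [MeasurableSpace Ω] (P : Measure Ω) [IsProbabilityMeasure P]
    (w : Ω → V d → V d → ℝ) (F : ℝ → ℝ) (γ : ℝ)
    (hiid : IIDConductances P w F) (hF : Continuous F)
    (hreg : RegVarZero F γ) (hγ : 0 < γ) (ζ : ℝ) (hζ : 0 ≤ ζ) :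
    Tendsto (fun n : ℕ => ((box d n).card : ℝ) *
        (P {ω | speed (w ω) 0 ≤
          (1 / hfun (fun t => (P {ω' | speed (w ω') 0 ≤ t}).toReal)
            ((box d n).card)) * ζ}).toReal)
      atTop (nhds (ζ ^ (2 * (d : ℝ) * γ))) := by
  classical
  have hd0 : 0 < d := by omega
  have hdR : (0:ℝ) < d := by exact_mod_cast hd0
  have houter : ∀ c : ℝ, (P {ω | speed (w ω) 0 ≤ c}).toReal
      = SpeedTail.cdf' P (fun ω => ∑ p ∈ SpeedTail.S0 d, SpeedTail.ff w p ω) c := by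
    intro c
    have hset : {ω | speed (w ω) 0 ≤ c}
        = {ω | (∑ p ∈ SpeedTail.S0 d, SpeedTail.ff w p ω) ≤ c} := by
      ext ω
      simp only [Set.mem_setOf_eq]
      rw [SpeedTail.speed_zero_eq w ω (fun x y => hiid.1 ω x y)]
    simp only [SpeedTail.cdf']
    rw [hset]
  simp only [houter]
  obtain ⟨hFppos, hFpreg0, hFpatom⟩ :=
    SpeedTail.good_sum P hiid hF hreg hγ hd0 (SpeedTail.S0 d) (SpeedTail.S0_nonempty hd0)
  have hZm : Measurable (fun ω => ∑ p ∈ SpeedTail.S0 d, SpeedTail.ff w p ω) :=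
    Finset.measurable_sum _ (fun p _ => hiid.2.2.1 _ _)
  have hZpos : ∀ ω, 0 < (∑ p ∈ SpeedTail.S0 d, SpeedTail.ff w p ω) :=
    fun ω => Finset.sum_pos
      (fun p _ => hiid.2.1 ω _ _ (SpeedTail.adj_add_single p.1 p.2))
      (SpeedTail.S0_nonempty hd0)
  have hcont : Continuous
      (SpeedTail.cdf' P (fun ω => ∑ p ∈ SpeedTail.S0 d, SpeedTail.ff w p ω)) :=
    SpeedTail.continuous_cdf'_of_atomless P hZm hFpatom
  have hmono : Monotone
      (SpeedTail.cdf' P (fun ω => ∑ p ∈ SpeedTail.S0 d, SpeedTail.ff w p ω)) :=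
    SpeedTail.cdf'_mono P
  have h0 : SpeedTail.cdf' P (fun ω => ∑ p ∈ SpeedTail.S0 d, SpeedTail.ff w p ω) 0 = 0 :=
    SpeedTail.cdf'_of_nonpos P hZpos le_rfl
  have hexp : 0 < 2 * (d:ℝ) * γ := mul_pos (mul_pos two_pos hdR) hγ
  have hσeq : ((SpeedTail.S0 d).card : ℝ) * γ = 2 * (d:ℝ) * γ := by
    rw [SpeedTail.S0_card]; push_cast; ring
  rw [hσeq] at hFpreg0
  obtain ⟨t₀, ht₀⟩ := SpeedTail.cdf'_exists_gt P hZm (by norm_num : (1:ℝ)/2 < 1)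
  have hNt : Tendsto (fun n : ℕ => ((box d n).card : ℝ)) atTop atTop := by
    have h1 : Tendsto (fun n : ℕ => (box d n).card) atTop atTop := by
      apply tendsto_atTop_mono (f := fun n : ℕ => n) ?_ tendsto_id
      intro n
      show n ≤ (box d n).card
      rw [SpeedTail.box_card]
      calc n ≤ 2*n+1 := by omega
        _ ≤ (2*n+1)^d := Nat.le_self_pow (by omega) _
    exact tendsto_natCast_atTop_atTop.comp h1
  rcases hζ.eq_or_lt with hz0 | hzpos
  · rw [← hz0]
    simp only [mul_zero, h0]
    rw [Real.zero_rpow hexp.ne']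
    exact tendsto_const_nhds
  · exact SpeedTail.final_limit hmono hcont h0 hFppos hFpreg0 ht₀ hNt hzpos
end
end
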